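/- arXiv:2012.04076 — 6 statements merged into one kernel-verified Lean document; each statement's English description precedes it below -/
import Mathlib

section
/- Fix natural numbers n, l, d with d ≤ n, and let u, v be vertices of the n-dimensional hypercube graph Q_n with Hamming distance d. Then, as an identity of integers, 2^n · W_{n,l}(u,v) = Σ_{i=0}^{n} Σ_{j=0}^{d} 1_{{j ≤ i}} · binom(d, j) · binom(n−d, i−j) · (−1)^j · (n − 2i)^l, where W_{n,l}(u,v) denotes the number of walks of length l from u to v in Q_n and (n − 2i)^l is computed in ℤ. -/
/-!
For `S ⊆ [n]` the character `χ_S(x) = (-1)^{|S ∩ x|}` of `(ℤ/2)^n` (reading `x` as the set of its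
`true` coordinates) is an eigenvector of the adjacency matrix `A` of `Q_n` with eigenvalue
`n - 2|S|`: flipping coordinate `i` multiplies `χ_S` by `-1` exactly when `i ∈ S`. The characters
are orthogonal of squared norm `2^n`, so they diagonalise `A` and
`2^n A^l(u,v) = Σ_S χ_S(u) χ_S(v) (n - 2|S|)^l`. Finally `χ_S(u) χ_S(v) = (-1)^{|S ∩ T|}` for the
set `T` of the `d` coordinates where `u` and `v` differ, and there are `C(d,j) C(n-d,i-j)` sets `S`
with `|S| = i` and `|S ∩ T| = j`.
-/

open SimpleGraph Finset

/-- The `n`-dimensional hypercube graph: vertices are `{0,1}^n`, two vertices being adjacent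
iff they differ in exactly one coordinate (Hamming distance `1`). -/
def cubeGraph (n : ℕ) : SimpleGraph (Fin n → Bool) where
  Adj u v := hammingDist u v = 1
  symm := by constructor; intro u v h; rwa [hammingDist_comm]
  loopless := by constructor; intro u h; simp [hammingDist_self] at h

/-- The number of walks of length `l` from `u` to `v` in the `n`-dimensional hypercube. -/
noncomputable def walkCount (n l : ℕ) (u v : Fin n → Bool) : ℕ :=
  Nat.card {p : (cubeGraph n).Walk u v // p.length = l}

section Walsh

open Matrix

variable {ι : Type*}

def walshChar (S : Finset ι) (x : ι → Bool) : ℤ := ∏ i ∈ S, if x i then -1 else 1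

lemma walshChar_mul_walshChar (S : Finset ι) (u v : ι → Bool) :
    walshChar S u * walshChar S v = ∏ i ∈ S, if u i = v i then 1 else -1 := by
  rw [walshChar, walshChar, ← prod_mul_distrib]
  refine prod_congr rfl fun i _ => ?_
  cases u i <;> cases v i <;> simp

lemma walshChar_mul_walshChar_eq_neg_one_pow (S : Finset ι) (u v : ι → Bool) :
    walshChar S u * walshChar S v = (-1) ^ #{i ∈ S | u i ≠ v i} := by
  rw [walshChar_mul_walshChar, prod_ite, prod_const_one, prod_const, one_mul]

lemma walshChar_update_not [DecidableEq ι] (S : Finset ι) (x : ι → Bool) (i : ι) :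
    walshChar S (Function.update x i (!x i)) = (if i ∈ S then -1 else 1) * walshChar S x := by
  unfold walshChar
  split_ifs with hi
  · rw [← mul_prod_erase S _ hi, ← mul_prod_erase S _ hi, Function.update_self, ← mul_assoc]
    congr 1
    · cases x i <;> simp
    · exact prod_congr rfl fun j hj => by rw [Function.update_of_ne (ne_of_mem_erase hj)]
  · rw [one_mul]
    exact prod_congr rfl fun j hj => by rw [Function.update_of_ne (ne_of_mem_of_not_mem hj hi)]

variable [Fintype ι]

lemma sum_ite_mem_neg_one_one [DecidableEq ι] (S : Finset ι) :
    ∑ i, (if i ∈ S then (-1 : ℤ) else 1) = Fintype.card ι - 2 * #S := by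
  rw [sum_ite, filter_mem_eq_inter, univ_inter, filter_notMem_eq_sdiff, ← compl_eq_univ_sdiff,
    sum_const, sum_const, card_compl, nsmul_eq_mul, nsmul_eq_mul, Nat.cast_sub (card_le_univ S)]
  ring

lemma sum_walshChar_mul_walshChar (u v : ι → Bool) :
    ∑ S : Finset ι, walshChar S u * walshChar S v = if u = v then 2 ^ Fintype.card ι else 0 := by
  simp_rw [walshChar_mul_walshChar, ← powerset_univ, ← prod_one_add]
  split_ifs with huv
  · simp [huv, one_add_one_eq_two]
  · obtain ⟨i, hi⟩ := Function.ne_iff.1 huv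
    exact prod_eq_zero (mem_univ i) (by simp [hi])

def walshMatrix (ι : Type*) : Matrix (Finset ι) (ι → Bool) ℤ := Matrix.of walshChar

lemma walshMatrix_transpose_mul_self :
    (walshMatrix ι)ᵀ * walshMatrix ι = (2 ^ Fintype.card ι : ℤ) • 1 := by
  ext u v
  rw [Matrix.mul_apply, Matrix.smul_apply, Matrix.one_apply]
  simpa [walshMatrix] using sum_walshChar_mul_walshChar u v

end Walsh

instance (n : ℕ) : DecidableRel (cubeGraph n).Adj :=
  fun u v => inferInstanceAs (Decidable (hammingDist u v = 1))

section Hypercube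

open Matrix

variable {n : ℕ}

lemma cubeGraph_adj_iff {u w : Fin n → Bool} :
    (cubeGraph n).Adj u w ↔ ∃ i, Function.update u i (!u i) = w := by
  change #{i | u i ≠ w i} = 1 ↔ _
  simp only [card_eq_one, Finset.ext_iff, mem_filter, mem_univ, true_and, mem_singleton,
    funext_iff, Function.update_apply]
  refine exists_congr fun i => forall_congr' fun j => ?_
  rcases eq_or_ne j i with rfl | hj <;> cases u j <;> cases w j <;> simp [*]

lemma update_not_injective (u : Fin n → Bool) :
    Function.Injective fun i => Function.update u i (!u i) := by
  intro i j hij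
  by_contra hne
  have := congrFun hij i
  simp [Function.update_of_ne hne] at this

lemma cubeGraph_neighborFinset (u : Fin n → Bool) :
    (cubeGraph n).neighborFinset u = univ.map ⟨_, update_not_injective u⟩ := by
  ext w
  simp [cubeGraph_adj_iff]

lemma adjMatrix_mulVec_walshChar (S : Finset (Fin n)) :
    (cubeGraph n).adjMatrix ℤ *ᵥ walshChar S = ((n : ℤ) - 2 * #S) • walshChar S := by
  ext u
  simp only [adjMatrix_mulVec_apply, cubeGraph_neighborFinset, sum_map,
    Function.Embedding.coeFn_mk, walshChar_update_not, ← sum_mul,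
    sum_ite_mem_neg_one_one, Fintype.card_fin, Pi.smul_apply, smul_eq_mul]

lemma walshMatrix_mul_adjMatrix :
    walshMatrix (Fin n) * (cubeGraph n).adjMatrix ℤ =
      diagonal (fun S : Finset (Fin n) => (n : ℤ) - 2 * #S) * walshMatrix (Fin n) := by
  ext S v
  change (walshChar S ᵥ* (cubeGraph n).adjMatrix ℤ) v = _
  rw [adjMatrix_vecMul_apply, ← adjMatrix_mulVec_apply, adjMatrix_mulVec_walshChar, diagonal_mul]
  rfl

lemma walshMatrix_mul_adjMatrix_pow (l : ℕ) :
    walshMatrix (Fin n) * (cubeGraph n).adjMatrix ℤ ^ l =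
      diagonal (fun S : Finset (Fin n) => ((n : ℤ) - 2 * #S) ^ l) * walshMatrix (Fin n) := by
  induction l with
  | zero => simp
  | succ l ih =>
    rw [pow_succ, ← Matrix.mul_assoc, ih, Matrix.mul_assoc, walshMatrix_mul_adjMatrix,
      ← Matrix.mul_assoc, diagonal_mul_diagonal]
    simp only [pow_succ]

lemma two_pow_mul_adjMatrix_pow_apply (l : ℕ) (u v : Fin n → Bool) :
    2 ^ n * ((cubeGraph n).adjMatrix ℤ ^ l) u v =
      ∑ S, walshChar S u * walshChar S v * ((n : ℤ) - 2 * #S) ^ l := by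
  have hspectral : (2 ^ n : ℤ) • (cubeGraph n).adjMatrix ℤ ^ l =
      (walshMatrix (Fin n))ᵀ * diagonal (fun S : Finset (Fin n) => ((n : ℤ) - 2 * #S) ^ l) *
        walshMatrix (Fin n) := by
    rw [Matrix.mul_assoc, ← walshMatrix_mul_adjMatrix_pow, ← Matrix.mul_assoc,
      walshMatrix_transpose_mul_self, Fintype.card_fin, smul_mul, one_mul]
  have := congrFun₂ hspectral u v
  rw [Matrix.smul_apply, smul_eq_mul, mul_apply] at this
  rw [this]
  refine sum_congr rfl fun S _ => ?_
  simp only [mul_diagonal, transpose_apply, walshMatrix, of_apply]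
  ring

end Hypercube

lemma walkCount_eq_adjMatrix_pow_apply {R : Type*} [Semiring R] (n l : ℕ) (u v : Fin n → Bool) :
    (walkCount n l u v : R) = ((cubeGraph n).adjMatrix R ^ l) u v := by
  rw [adjMatrix_pow_apply_eq_card_walk, walkCount, Nat.card_eq_fintype_card]
  rfl

section Counting

variable {α M : Type*}

lemma sum_powerset_filter_filter [DecidableEq α] [AddCommMonoid M] (s : Finset α)
    (p : α → Prop) [DecidablePred p] (f : Finset α → Finset α → M) :
    ∑ S ∈ s.powerset, f {i ∈ S | p i} {i ∈ S | ¬p i} =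
      ∑ A ∈ {i ∈ s | p i}.powerset, ∑ B ∈ {i ∈ s | ¬p i}.powerset, f A B := by
  rw [← sum_product']
  refine sum_nbij' (fun S => ({i ∈ S | p i}, {i ∈ S | ¬p i})) (fun AB => AB.1 ∪ AB.2)
    ?_ ?_ ?_ ?_ fun _ _ => rfl
  · intro S hS
    simp only [mem_powerset, mem_product] at hS ⊢
    exact ⟨filter_subset_filter _ hS, filter_subset_filter _ hS⟩
  · intro AB hAB
    simp only [mem_powerset, mem_product] at hAB ⊢
    exact union_subset (hAB.1.trans (filter_subset _ _)) (hAB.2.trans (filter_subset _ _))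
  · intro S _
    exact filter_union_filter_not_eq p S
  · rintro ⟨A, B⟩ hAB
    simp only [mem_product, mem_powerset, subset_iff, mem_filter] at hAB
    simp only [filter_union, Prod.mk.injEq]
    constructor
    · rw [filter_true_of_mem fun i hi => (hAB.1 hi).2, filter_false_of_mem fun i hi => (hAB.2 hi).2,
        union_empty]
    · rw [filter_false_of_mem fun i hi => not_not.2 (hAB.1 hi).2,
        filter_true_of_mem fun i hi => (hAB.2 hi).2, empty_union]

lemma sum_range_ite_choose_sub [Semiring M] {m j N : ℕ} (h : m + j ≤ N) (g : ℕ → M) :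
    ∑ i ∈ range (N + 1), (if j ≤ i then (m.choose (i - j) : M) * g i else 0) =
      ∑ k ∈ range (m + 1), (m.choose k : M) * g (j + k) := by
  have hIco : {i ∈ range (N + 1) | j ≤ i} = Ico j (N + 1) := by
    ext i; simp [and_comm]
  rw [← sum_filter, hIco, sum_Ico_eq_sum_range]
  simp only [add_tsub_cancel_left]
  refine (sum_subset (range_subset_range.2 (by omega)) fun k _ hk => ?_).symm
  rw [Nat.choose_eq_zero_of_lt (by simpa using hk), Nat.cast_zero, zero_mul]

lemma sum_powerset_neg_one_pow_card_filter_mul [CommRing M] (s : Finset α) (p : α → Prop)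
    [DecidablePred p] {d : ℕ} (hd : #{i ∈ s | p i} = d) (f : ℕ → M) :
    ∑ S ∈ s.powerset, (-1) ^ #{i ∈ S | p i} * f #S =
      ∑ i ∈ range (#s + 1), ∑ j ∈ range (d + 1),
        (if j ≤ i then (d.choose j : M) * ((#s - d).choose (i - j) : M) * (-1) ^ j * f i
         else 0) := by
  classical
  have hd' : #{i ∈ s | ¬p i} = #s - d := by
    rw [← hd, ← card_filter_add_card_filter_not (s := s) p, add_tsub_cancel_left]
  calc ∑ S ∈ s.powerset, (-1) ^ #{i ∈ S | p i} * f #S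
      = ∑ S ∈ s.powerset, (-1) ^ #{i ∈ S | p i} * f (#{i ∈ S | p i} + #{i ∈ S | ¬p i}) := by
        simp only [card_filter_add_card_filter_not]
    _ = ∑ A ∈ {i ∈ s | p i}.powerset, ∑ B ∈ {i ∈ s | ¬p i}.powerset,
          (-1) ^ #A * f (#A + #B) :=
        sum_powerset_filter_filter s p fun A B => (-1) ^ #A * f (#A + #B)
    _ = ∑ j ∈ range (d + 1), ∑ k ∈ range (#s - d + 1),
          (d.choose j : M) * ((#s - d).choose k * ((-1) ^ j * f (j + k))) := by
        rw [sum_powerset_apply_card fun a => ∑ B ∈ {i ∈ s | ¬p i}.powerset,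
          (-1 : M) ^ a * f (a + #B), hd]
        refine sum_congr rfl fun j _ => ?_
        rw [sum_powerset_apply_card fun b => (-1 : M) ^ j * f (j + b), hd', nsmul_eq_mul, mul_sum]
        simp only [nsmul_eq_mul]
    _ = ∑ j ∈ range (d + 1), ∑ i ∈ range (#s + 1),
          (if j ≤ i then (d.choose j : M) * ((#s - d).choose (i - j) : M) * (-1) ^ j * f i
           else 0) := by
        refine sum_congr rfl fun j hj => ?_
        have hjd : #s - d + j ≤ #s := by
          have := mem_range.1 hj
          have : d ≤ #s := hd ▸ card_filter_le s p
          omega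
        rw [← mul_sum, ← sum_range_ite_choose_sub hjd fun i => (-1) ^ j * f i, mul_sum]
        refine sum_congr rfl fun i _ => ?_
        split_ifs <;> ring
    _ = _ := sum_comm

end Counting

theorem stanley_formula_general (n l d : ℕ) (u v : Fin n → Bool)
    (huv : hammingDist u v = d) :
    (2 : ℤ) ^ n * (walkCount n l u v : ℤ) =
      ∑ i ∈ Finset.range (n + 1), ∑ j ∈ Finset.range (d + 1),
        (if j ≤ i then
          (d.choose j : ℤ) * ((n - d).choose (i - j) : ℤ) * (-1) ^ j * ((n : ℤ) - 2 * i) ^ l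
         else 0) := by
  rw [walkCount_eq_adjMatrix_pow_apply, two_pow_mul_adjMatrix_pow_apply]
  simp_rw [walshChar_mul_walshChar_eq_neg_one_pow]
  rw [← powerset_univ, sum_powerset_neg_one_pow_card_filter_mul univ _ huv
    fun k => ((n : ℤ) - 2 * k) ^ l, card_univ, Fintype.card_fin]

/-- **Stanley's formula**: for vertices `u, v` of the hypercube `Q_n` at Hamming distance `d`,
`2^n · W_{n,l}(u,v) = Σ_{i=0}^{n} Σ_{j=0}^{d} 1_{j ≤ i} · C(d,j) · C(n−d,i−j) · (−1)^j · (n−2i)^l`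
as an identity of integers, where `W_{n,l}(u,v)` is the number of walks of length `l`
from `u` to `v`. -/
theorem stanley_formula (n l d : ℕ) (hd : d ≤ n) (u v : Fin n → Bool)
    (huv : hammingDist u v = d) :
    (2 : ℤ) ^ n * (walkCount n l u v : ℤ) =
      ∑ i ∈ Finset.range (n + 1), ∑ j ∈ Finset.range (d + 1),
        (if j ≤ i then
          (d.choose j : ℤ) * ((n - d).choose (i - j) : ℤ) * (-1) ^ j * ((n : ℤ) - 2 * i) ^ l
         else 0) :=
  stanley_formula_general n l d u v huv
end

section
/- Let ξ_1, ξ_2, … be mutually independent random variables on a probability space, each exponentially distributed with rate 1, and set X_l := ξ_1 + ⋯ + ξ_l. Then for every natural number l and every real x > 0: e^{−x} · x^l / l! ≤ P(X_l ≤ x) ≤ (1 + e^{x} · x/(l+1)) · e^{−x} · x^l / l!. -/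
/-!
Convolving a Gamma(`a`, `r`) density with an Exp(`r`) density gives Gamma(`a + 1`, `r`): on the
support `0 ≤ y ≤ x` the product of the densities at `y` and `x - y` is `e^{-rx}` times a multiple
of `y^{a-1}`. Hence `X_l` is Gamma(`l`, 1)-distributed for `l ≥ 1`, and its CDF is the Poisson tail
`F_l(x) = 1 - ∑_{k<l} e^{-x} x^k / k!`. So `P(X_l ≤ x) = e^{-x} x^l / l! + F_{l+1}(x)`, where
`0 ≤ F_{l+1}(x) = ∫_0^x t^l e^{-t} / l! dt ≤ x^{l+1} / (l+1)!`; the upper bound of the theorem is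
exactly `e^{-x} x^l / l! + x^{l+1} / (l+1)!`.
-/
open MeasureTheory ProbabilityTheory Finset Real
open scoped Nat

lemma gammaPDF_mul_exponentialPDF_sub {a r x y : ℝ} (hr : 0 ≤ r) (hy : y ∈ Set.Icc 0 x) :
    gammaPDF a r y * exponentialPDF r (-y + x)
      = ENNReal.ofReal (r ^ a * r / Gamma a * exp (-(r * x)) * y ^ (a - 1)) := by
  rw [gammaPDF_of_nonneg hy.1, exponentialPDF_of_nonneg (by linarith [hy.2]),
    ← ENNReal.ofReal_mul' (by positivity)]
  congr 1
  have hexp : exp (-(r * y)) * exp (-(r * (-y + x))) = exp (-(r * x)) := by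
    rw [← exp_add]; ring_nf
  linear_combination (r ^ a * r / Gamma a * y ^ (a - 1)) * hexp

lemma gammaPDF_lconvolution_exponentialPDF {a r : ℝ} (ha : 0 < a) (hr : 0 ≤ r) (x : ℝ) :
    (gammaPDF a r ⋆ₗ exponentialPDF r) x = gammaPDF (a + 1) r x := by
  rw [lconvolution_def]
  rcases lt_or_ge x 0 with hx | hx
  · rw [gammaPDF_of_neg hx, ← lintegral_zero]
    refine lintegral_congr fun y => ?_
    rcases lt_or_ge y 0 with hy | hy
    · rw [gammaPDF_of_neg hy, zero_mul]
    · rw [exponentialPDF_of_neg (by linarith), mul_zero]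
  set C := r ^ a * r / Gamma a * exp (-(r * x)) with hC_def
  have hC : 0 ≤ C := by have := Gamma_pos_of_pos ha; positivity
  have hpt : ∀ y, gammaPDF a r y * exponentialPDF r (-y + x)
      = (Set.Icc 0 x).indicator (fun y => ENNReal.ofReal (C * y ^ (a - 1))) y := by
    intro y
    by_cases hy : y ∈ Set.Icc 0 x
    · rw [Set.indicator_of_mem hy, gammaPDF_mul_exponentialPDF_sub hr hy]
    · rw [Set.indicator_of_notMem hy]
      rcases lt_or_ge y 0 with hy0 | hy0
      · rw [gammaPDF_of_neg hy0, zero_mul]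
      · rw [exponentialPDF_of_neg (by simp_all), mul_zero]
  have hint : IntegrableOn (fun y => C * y ^ (a - 1)) (Set.Icc 0 x) :=
    (intervalIntegrable_iff_integrableOn_Icc_of_le hx).1
      ((intervalIntegral.intervalIntegrable_rpow' (by linarith)).const_mul C)
  rw [lintegral_congr hpt, lintegral_indicator measurableSet_Icc,
    ← ofReal_integral_eq_lintegral_ofReal hint
      ((ae_restrict_iff' measurableSet_Icc).2 (ae_of_all _ fun y hy => by
        have := hy.1; positivity)),
    integral_Icc_eq_integral_Ioc, ← intervalIntegral.integral_of_le hx,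
    intervalIntegral.integral_const_mul, integral_rpow (Or.inl (by linarith)),
    gammaPDF_of_nonneg hx, Gamma_add_one ha.ne', rpow_add_one' hr (by linarith)]
  congr 1
  rw [sub_add_cancel, add_sub_cancel_right, zero_rpow ha.ne', sub_zero]
  rw [hC_def]
  field_simp [(Gamma_pos_of_pos ha).ne']

theorem gammaMeasure_conv_expMeasure {a r : ℝ} (ha : 0 < a) (hr : 0 ≤ r) :
    gammaMeasure a r ∗ expMeasure r = gammaMeasure (a + 1) r := by
  rw [expMeasure, gammaMeasure, gammaMeasure, gammaMeasure,
    conv_withDensity_eq_lconvolution (by unfold gammaPDF; fun_prop) (by unfold gammaPDF; fun_prop)]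
  congr 1
  funext x
  exact gammaPDF_lconvolution_exponentialPDF ha hr x

theorem hasLaw_sum_range_succ_gammaMeasure {Ω : Type*} [MeasurableSpace Ω] {μ : Measure Ω}
    {ξ : ℕ → Ω → ℝ} {r : ℝ} (hr : 0 < r) (hξ : ∀ i, HasLaw (ξ i) (expMeasure r) μ)
    (hindep : iIndepFun ξ μ) (n : ℕ) :
    HasLaw (∑ i ∈ range (n + 1), ξ i) (gammaMeasure (n + 1) r) μ := by
  induction n with
  | zero => simpa [expMeasure] using hξ 0
  | succ n ih =>
    have := isProbabilityMeasure_gammaMeasure (a := n + 1) (by positivity) hr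
    have := isProbabilityMeasure_expMeasure hr
    rw [sum_range_succ, Nat.cast_succ, ← gammaMeasure_conv_expMeasure (by positivity) hr.le]
    exact (hindep.indepFun_sum_range_succ₀ (fun i => (hξ i).aemeasurable) _).hasLaw_add ih (hξ _)

/-- `P(ξ₁ + ⋯ + ξₙ ≤ x)` for i.i.d. rate-1 exponentials `ξᵢ` and `x ≥ 0`, written as the tail
`P(N ≥ n)` of a Poisson(`x`) variable `N`. -/
noncomputable def erlangCDF (n : ℕ) (x : ℝ) : ℝ :=
  1 - ∑ k ∈ range n, exp (-x) * x ^ k / k !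

lemma erlangCDF_eq_add_erlangCDF_succ (n : ℕ) (x : ℝ) :
    erlangCDF n x = exp (-x) * x ^ n / n ! + erlangCDF (n + 1) x := by
  rw [erlangCDF, erlangCDF, sum_range_succ]
  ring

lemma erlangCDF_succ_zero (n : ℕ) : erlangCDF (n + 1) 0 = 0 := by
  simp [erlangCDF, sum_range_succ']

lemma hasDerivAt_erlangCDF_succ (n : ℕ) (t : ℝ) :
    HasDerivAt (erlangCDF (n + 1)) (t ^ n * exp (-t) / n !) t := by
  induction n with
  | zero =>
    have h1 : erlangCDF 1 = fun t => 1 - exp (-t) := by funext t; simp [erlangCDF]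
    simpa [h1] using ((hasDerivAt_neg t).exp).const_sub 1
  | succ n ih =>
    have hterm : HasDerivAt (fun t => exp (-t) * t ^ (n + 1) / (n + 1)!)
        ((-exp (-t) * t ^ (n + 1) + exp (-t) * ((n + 1) * t ^ n)) / (n + 1)!) t := by
      have := ((hasDerivAt_neg t).exp.mul (hasDerivAt_pow (n + 1) t)).div_const ((n + 1)! : ℝ)
      simpa using this
    have hsplit : erlangCDF (n + 1 + 1)
        = fun t => erlangCDF (n + 1) t - exp (-t) * t ^ (n + 1) / (n + 1)! := by
      funext t; rw [erlangCDF_eq_add_erlangCDF_succ (n + 1) t]; ring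
    rw [hsplit]
    refine (ih.sub hterm).congr_deriv ?_
    rw [Nat.factorial_succ]
    push_cast
    field_simp
    ring

lemma integral_pow_mul_exp_neg_div_factorial (n : ℕ) (x : ℝ) :
    ∫ t in 0..x, t ^ n * exp (-t) / n ! = erlangCDF (n + 1) x := by
  rw [intervalIntegral.integral_eq_sub_of_hasDerivAt (fun t _ => hasDerivAt_erlangCDF_succ n t)
    (by apply Continuous.intervalIntegrable; fun_prop), erlangCDF_succ_zero, sub_zero]

lemma erlangCDF_succ_nonneg (n : ℕ) {x : ℝ} (hx : 0 ≤ x) : 0 ≤ erlangCDF (n + 1) x := by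
  rw [← integral_pow_mul_exp_neg_div_factorial]
  exact intervalIntegral.integral_nonneg hx fun t ht => by have := ht.1; positivity

lemma erlangCDF_succ_le (n : ℕ) {x : ℝ} (hx : 0 ≤ x) :
    erlangCDF (n + 1) x ≤ x ^ (n + 1) / (n + 1)! := by
  calc erlangCDF (n + 1) x = ∫ t in 0..x, t ^ n * exp (-t) / n ! :=
        (integral_pow_mul_exp_neg_div_factorial n x).symm
    _ ≤ ∫ t in 0..x, t ^ n / n ! := by
        refine intervalIntegral.integral_mono_on hx
          (by apply Continuous.intervalIntegrable; fun_prop)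
          (by apply Continuous.intervalIntegrable; fun_prop) fun t ht => ?_
        have := ht.1
        gcongr
        exact mul_le_of_le_one_right (by positivity) (exp_le_one_iff.2 (by linarith))
    _ = x ^ (n + 1) / (n + 1)! := by
        rw [intervalIntegral.integral_div, integral_pow, Nat.factorial_succ]
        push_cast
        field_simp
        ring

lemma gammaPDFReal_natCast_add_one_one (n : ℕ) :
    gammaPDFReal (n + 1) 1 = (Set.Ici 0).indicator fun t => t ^ n * exp (-t) / n ! := by
  funext t
  simp only [gammaPDFReal, Set.indicator, Set.mem_Ici]
  split_ifs
  · rw [Gamma_nat_eq_factorial, add_sub_cancel_right, rpow_natCast, one_rpow, one_mul]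
    ring
  · rfl

lemma gammaMeasure_real_Iic (n : ℕ) {x : ℝ} (hx : 0 ≤ x) :
    (gammaMeasure (n + 1) 1).real (Set.Iic x) = erlangCDF (n + 1) x := by
  have := isProbabilityMeasure_gammaMeasure (a := n + 1) (by positivity) one_pos
  rw [← cdf_eq_real, cdf_gammaMeasure_eq_integral (by positivity) one_pos,
    gammaPDFReal_natCast_add_one_one, setIntegral_indicator measurableSet_Ici,
    Set.Iic_inter_Ici, integral_Icc_eq_integral_Ioc, ← intervalIntegral.integral_of_le hx,
    integral_pow_mul_exp_neg_div_factorial]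

lemma measureReal_sum_range_le_eq_erlangCDF {Ω : Type*} [MeasurableSpace Ω] {μ : Measure Ω}
    [IsProbabilityMeasure μ] {ξ : ℕ → Ω → ℝ} (hξ : ∀ i, HasLaw (ξ i) (expMeasure 1) μ)
    (hindep : iIndepFun ξ μ) (l : ℕ) {x : ℝ} (hx : 0 ≤ x) :
    μ.real {ω | ∑ i ∈ range l, ξ i ω ≤ x} = erlangCDF l x := by
  cases l with
  | zero => simp [erlangCDF, hx]
  | succ n =>
    have h := (hasLaw_sum_range_succ_gammaMeasure one_pos hξ hindep n).measureReal_eq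
      (p := (· ≤ x)) measurableSet_Iic
    simp only [Finset.sum_apply] at h
    rw [h, ← gammaMeasure_real_Iic n hx]
    rfl

theorem exponential_sum_tail_estimate_general
    {Ω : Type*} [MeasurableSpace Ω] (μ : Measure Ω) [IsProbabilityMeasure μ]
    (ξ : ℕ → Ω → ℝ)
    (hindep : iIndepFun ξ μ)
    (hexp : ∀ i, μ.map (ξ i) = expMeasure 1)
    (l : ℕ) (x : ℝ) (hx : 0 < x) :
    Real.exp (-x) * x ^ l / (l.factorial : ℝ) ≤
        (μ {ω | ∑ i ∈ Finset.range l, ξ i ω ≤ x}).toReal ∧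
      (μ {ω | ∑ i ∈ Finset.range l, ξ i ω ≤ x}).toReal ≤
        (1 + Real.exp x * x / (l + 1)) * (Real.exp (-x) * x ^ l / (l.factorial : ℝ)) := by
  have hξ : ∀ i, HasLaw (ξ i) (expMeasure 1) μ := fun i =>
    ⟨.of_map_ne_zero <| by
      simp [hexp i, (isProbabilityMeasure_expMeasure one_pos).ne_zero], hexp i⟩
  have hP : (μ {ω | ∑ i ∈ range l, ξ i ω ≤ x}).toReal = erlangCDF l x :=
    measureReal_sum_range_le_eq_erlangCDF hξ hindep l hx.le
  have hbound : (1 + exp x * x / (l + 1)) * (exp (-x) * x ^ l / l !)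
      = exp (-x) * x ^ l / l ! + x ^ (l + 1) / (l + 1)! := by
    rw [Nat.factorial_succ, exp_neg]
    push_cast
    field_simp
    ring
  rw [hP, erlangCDF_eq_add_erlangCDF_succ, hbound]
  exact ⟨le_add_of_nonneg_right (erlangCDF_succ_nonneg l hx.le),
    add_le_add_right (erlangCDF_succ_le l hx.le) _⟩

/-- **Tail estimates for sums of i.i.d. standard exponentials**: if `ξ 0, ξ 1, …` are mutually
independent rate-1 exponential random variables and `X_l := ξ 0 + ⋯ + ξ (l-1)` is the sum of
the first `l` of them, then for every `l` and every real `x > 0`,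
`e^{−x} x^l / l! ≤ P(X_l ≤ x) ≤ (1 + e^x · x/(l+1)) · e^{−x} x^l / l!`. -/
theorem exponential_sum_tail_estimate
    {Ω : Type*} [MeasurableSpace Ω] (μ : Measure Ω) [IsProbabilityMeasure μ]
    (ξ : ℕ → Ω → ℝ) (hmeas : ∀ i, Measurable (ξ i))
    (hindep : iIndepFun ξ μ)
    (hexp : ∀ i, μ.map (ξ i) = expMeasure 1)
    (l : ℕ) (x : ℝ) (hx : 0 < x) :
    Real.exp (-x) * x ^ l / (l.factorial : ℝ) ≤
        (μ {ω | ∑ i ∈ Finset.range l, ξ i ω ≤ x}).toReal ∧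
      (μ {ω | ∑ i ∈ Finset.range l, ξ i ω ≤ x}).toReal ≤
        (1 + Real.exp x * x / (l + 1)) * (Real.exp (-x) * x ^ l / (l.factorial : ℝ)) :=
  exponential_sum_tail_estimate_general μ ξ hindep hexp l x hx
end

section
/- Fix an integer K ≥ 1. Call d = (d_1,…,d_K) ∈ ℝ^K admissible if for every 1 ≤ i ≤ K one has d_i/2 − 1/(2K) ≥ 0, (i−1)/K − d_i/2 + 1/(2K) ≥ 0, and 1 − (i−1)/K − d_i/2 − 1/(2K) ≥ 0, and define F(d) := Π_{i=1}^{K} g_{i,K}(d_i). Let 𝖽 = (𝖽_1,…,𝖽_K) with 𝖽_i := sinh(a_i·E)·cosh((1−a_i)·E). Then 𝖽 is admissible, F(𝖽) = 1, and F(d) < 1 for every admissible d with d ≠ 𝖽. -/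
open Real Finset

/-- The ground-state energy `E = log(1+√2) = arcsinh(1)`, so that `sinh E = 1`. -/
noncomputable def groundE : ℝ := Real.log (1 + Real.sqrt 2)

/-- `ᾱ_i = (1/2)·(1 + arsinh(2i/K − 1)/E)` for `0 ≤ i ≤ K`. -/
noncomputable def abar (K i : ℕ) : ℝ :=
  (1 / 2) * (1 + Real.arsinh (2 * (i : ℝ) / (K : ℝ) - 1) / groundE)

/-- `a_i = ᾱ_i − ᾱ_{i−1}` for `1 ≤ i ≤ K`. -/
noncomputable def aseq (K i : ℕ) : ℝ := abar K i - abar K (i - 1)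

/-- `φ(x) = x^x` (real power, with the convention `0^0 = 1`). -/
noncomputable def phiFun (x : ℝ) : ℝ := x ^ x

/-- The function `g_{j,K}` from the optimal Hamming-distance analysis. -/
noncomputable def gFun (K j : ℕ) (x : ℝ) : ℝ :=
  (Real.sinh (aseq K j * groundE) ^ x * Real.cosh (aseq K j * groundE) ^ (1 - x) *
      phiFun (((j : ℝ) - 1) / (K : ℝ)) * phiFun (1 - ((j : ℝ) - 1) / (K : ℝ))) /
    (phiFun (x / 2 - 1 / (2 * (K : ℝ))) *
      phiFun (((j : ℝ) - 1) / (K : ℝ) - x / 2 + 1 / (2 * (K : ℝ))) *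
      phiFun (x / 2 + 1 / (2 * (K : ℝ))) *
      phiFun (1 - ((j : ℝ) - 1) / (K : ℝ) - x / 2 - 1 / (2 * (K : ℝ))))

/-- `d = (d_1,…,d_K)` is admissible if all arguments of `φ` in `g_{i,K}(d_i)` are nonnegative.
Here `d : Fin K → ℝ`, with `d i` standing for `d_{i+1}` (1-based index `i+1`). -/
def Admissible (K : ℕ) (d : Fin K → ℝ) : Prop :=
  ∀ i : Fin K, 0 ≤ d i / 2 - 1 / (2 * (K : ℝ)) ∧
    0 ≤ (i : ℝ) / (K : ℝ) - d i / 2 + 1 / (2 * (K : ℝ)) ∧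
    0 ≤ 1 - (i : ℝ) / (K : ℝ) - d i / 2 - 1 / (2 * (K : ℝ))

/-- `F(d) = Π_{i=1}^{K} g_{i,K}(d_i)`. -/
noncomputable def Ffun (K : ℕ) (d : Fin K → ℝ) : ℝ :=
  ∏ i : Fin K, gFun K ((i : ℕ) + 1) (d i)

/-- The optimal Hamming distances `𝖽_i = sinh(a_i·E)·cosh((1−a_i)·E)`. -/
noncomputable def dOpt (K : ℕ) (i : Fin K) : ℝ :=
  Real.sinh (aseq K ((i : ℕ) + 1) * groundE) *
    Real.cosh ((1 - aseq K ((i : ℕ) + 1)) * groundE)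


lemma groundE_eq : groundE = Real.arsinh 1 := by
  unfold groundE Real.arsinh; norm_num

lemma sinh_groundE : Real.sinh groundE = 1 := by rw [groundE_eq, Real.sinh_arsinh]

lemma groundE_pos : 0 < groundE := by
  rw [groundE_eq]; exact Real.arsinh_pos_iff.2 one_pos


lemma rpow_pos' {b e : ℝ} (hb : 0 ≤ b) (h : b = 0 → e = 0) : 0 < b ^ e := by
  rcases hb.eq_or_lt with h0 | h0
  · rw [← h0, h h0.symm, Real.rpow_zero]; norm_num
  · exact Real.rpow_pos_of_pos h0 e

lemma pt_lt {t q : ℝ} (ht : 0 ≤ t) (hq : 0 ≤ q) (hne : q ≠ t) :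
    q ^ t < t ^ t * Real.exp (q - t) := by
  rcases ht.eq_or_lt with h0 | h0
  · rw [← h0, Real.rpow_zero, Real.rpow_zero, one_mul, sub_zero]
    have hq0 : 0 < q := lt_of_le_of_ne hq (by rw [← h0] at hne; exact Ne.symm hne)
    calc (1:ℝ) = Real.exp 0 := by rw [Real.exp_zero]
    _ < Real.exp q := Real.exp_lt_exp.2 hq0
  · rcases hq.eq_or_lt with hq0 | hq0
    · rw [← hq0, Real.zero_rpow h0.ne']
      positivity
    · rw [Real.rpow_def_of_pos hq0, Real.rpow_def_of_pos h0, ← Real.exp_add,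
        Real.exp_lt_exp]
      have h1 : Real.log (q / t) < q / t - 1 :=
        Real.log_lt_sub_one_of_pos (by positivity) (by
          intro h; apply hne; field_simp at h; linarith)
      rw [Real.log_div hq0.ne' h0.ne'] at h1
      have := mul_lt_mul_of_pos_left h1 h0
      rw [mul_sub] at this
      field_simp at this ⊢
      nlinarith

lemma pt_le {t q : ℝ} (ht : 0 ≤ t) (hq : 0 ≤ q) :
    q ^ t ≤ t ^ t * Real.exp (q - t) := by
  rcases eq_or_ne q t with h | h
  · subst h; simp
  · exact (pt_lt ht hq h).le

lemma phi_pos' {x : ℝ} (hx : 0 ≤ x) : 0 < x ^ x :=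
  rpow_pos' hx (fun h => h)

lemma phiFun_pos {x : ℝ} (hx : 0 ≤ x) : 0 < phiFun x := by
  rw [phiFun]; exact phi_pos' hx

lemma pair_le {A B A' B' : ℝ} (hA : 0 ≤ A) (hB : 0 ≤ B) (hA' : 0 ≤ A') (hB' : 0 ≤ B')
    (hsum : A + B = A' + B') : A' ^ A * B' ^ B ≤ A ^ A * B ^ B := by
  calc A' ^ A * B' ^ B ≤ (A ^ A * Real.exp (A' - A)) * (B ^ B * Real.exp (B' - B)) := by
        apply mul_le_mul (pt_le hA hA') (pt_le hB hB') (Real.rpow_nonneg hB' B)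
        positivity
    _ = A ^ A * B ^ B * Real.exp ((A' - A) + (B' - B)) := by rw [Real.exp_add]; ring
    _ = A ^ A * B ^ B := by
        rw [show (A' - A) + (B' - B) = 0 from by linarith, Real.exp_zero, mul_one]

lemma pair_lt {A B A' B' : ℝ} (hA : 0 ≤ A) (hB : 0 ≤ B) (hA' : 0 ≤ A') (hB' : 0 ≤ B')
    (hsum : A + B = A' + B') (hne : A' ≠ A) : A' ^ A * B' ^ B < A ^ A * B ^ B := by
  have hB2 : 0 < B ^ B * Real.exp (B' - B) := by
    have := phi_pos' hB; positivity
  calc A' ^ A * B' ^ B ≤ A' ^ A * (B ^ B * Real.exp (B' - B)) :=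
        mul_le_mul_of_nonneg_left (pt_le hB hB') (Real.rpow_nonneg hA' A)
    _ < (A ^ A * Real.exp (A' - A)) * (B ^ B * Real.exp (B' - B)) :=
        mul_lt_mul_of_pos_right (pt_lt hA hA' hne) hB2
    _ = A ^ A * B ^ B * Real.exp ((A' - A) + (B' - B)) := by rw [Real.exp_add]; ring
    _ = A ^ A * B ^ B := by
        rw [show (A' - A) + (B' - B) = 0 from by linarith, Real.exp_zero, mul_one]

lemma phi_mul {a b c : ℝ} (h : a = b * c) (hb : 0 ≤ b) (hc : 0 ≤ c) :
    phiFun a = b ^ a * c ^ a := by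
  rw [phiFun, h]; exact Real.mul_rpow hb hc

lemma phi_base {a b : ℝ} (h : a = b) : phiFun a = b ^ a := by rw [phiFun, h]

lemma collect (sw cw sX cX sY cY A B C D : ℝ)
    (h1 : 0 ≤ sw) (h2 : 0 ≤ cw) (h3 : 0 ≤ sX) (h4 : 0 ≤ cX) (h5 : 0 ≤ sY) (h6 : 0 ≤ cY)
    (hA : 0 ≤ A) (hB : 0 ≤ B) (hC : 0 ≤ C) (hD : 0 ≤ D) :
    (sw*sX*sY) ^ A * (cw*sX*cY) ^ B * ((sw*cX*cY) ^ C * (cw*cX*sY) ^ D)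
      = sw ^ (A+C) * (cw ^ (B+D) * (sX ^ (A+B) * (cX ^ (C+D) * (sY ^ (A+D) * cY ^ (B+C))))) := by
  rw [Real.rpow_add_of_nonneg h1 hA hC, Real.rpow_add_of_nonneg h2 hB hD,
    Real.rpow_add_of_nonneg h3 hA hB, Real.rpow_add_of_nonneg h4 hC hD,
    Real.rpow_add_of_nonneg h5 hA hD, Real.rpow_add_of_nonneg h6 hB hC,
    Real.mul_rpow (mul_nonneg h1 h3) h5, Real.mul_rpow h1 h3,
    Real.mul_rpow (mul_nonneg h2 h3) h6, Real.mul_rpow h2 h3,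
    Real.mul_rpow (mul_nonneg h1 h4) h6, Real.mul_rpow h1 h4,
    Real.mul_rpow (mul_nonneg h2 h4) h5, Real.mul_rpow h2 h4]
  ring

lemma core (sw cw sX cX sY cY β δ x : ℝ)
    (hsw : 0 < sw) (hcw : 0 < cw) (hsX : 0 ≤ sX) (hcX : 0 < cX) (hsY : 0 ≤ sY) (hcY : 0 < cY)
    (hβ : β = sX * (cY*cw + sY*sw))
    (hβ1 : 1 - β = cX * (sY*cw + cY*sw))
    (hδ : δ = (cX*cY - sX*sY) * sw / 2) (hδpos : 0 < δ)
    (hA : 0 ≤ x/2 - δ) (hB : 0 ≤ β - x/2 + δ) (hD : 0 ≤ 1 - β - x/2 - δ) :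
    0 < (sw ^ x * cw ^ (1-x) * phiFun β * phiFun (1-β)) /
        (phiFun (x/2 - δ) * phiFun (β - x/2 + δ) * phiFun (x/2 + δ) * phiFun (1 - β - x/2 - δ)) ∧
    (sw ^ x * cw ^ (1-x) * phiFun β * phiFun (1-β)) /
        (phiFun (x/2 - δ) * phiFun (β - x/2 + δ) * phiFun (x/2 + δ) * phiFun (1 - β - x/2 - δ))
      ≤ ((sY*cw + cY*sw) ^ (1-β) * (cY*cw + sY*sw) ^ β) / (sY ^ (1-β-2*δ) * cY ^ (β+2*δ)) ∧
    (x ≠ sw * (cX*cY + sX*sY) →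
      (sw ^ x * cw ^ (1-x) * phiFun β * phiFun (1-β)) /
        (phiFun (x/2 - δ) * phiFun (β - x/2 + δ) * phiFun (x/2 + δ) * phiFun (1 - β - x/2 - δ))
      < ((sY*cw + cY*sw) ^ (1-β) * (cY*cw + sY*sw) ^ β) / (sY ^ (1-β-2*δ) * cY ^ (β+2*δ))) ∧
    (x = sw * (cX*cY + sX*sY) →
      (sw ^ x * cw ^ (1-x) * phiFun β * phiFun (1-β)) /
        (phiFun (x/2 - δ) * phiFun (β - x/2 + δ) * phiFun (x/2 + δ) * phiFun (1 - β - x/2 - δ))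
      = ((sY*cw + cY*sw) ^ (1-β) * (cY*cw + sY*sw) ^ β) / (sY ^ (1-β-2*δ) * cY ^ (β+2*δ))) := by
  have hC : 0 ≤ x/2 + δ := by linarith
  have hA'nn : (0:ℝ) ≤ sw*sX*sY := by positivity
  have hB'nn : (0:ℝ) ≤ cw*sX*cY := by positivity
  have hC'nn : (0:ℝ) ≤ sw*cX*cY := by positivity
  have hD'nn : (0:ℝ) ≤ cw*cX*sY := by positivity
  have s1 : x/2 - δ + (β - x/2 + δ) = sw*sX*sY + cw*sX*cY := by linear_combination hβ
  have s2 : x/2 + δ + (1 - β - x/2 - δ) = sw*cX*cY + cw*cX*sY := by linear_combination hβ1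
  have p1 : (sw*sX*sY) ^ (x/2-δ) * (cw*sX*cY) ^ (β-x/2+δ)
      ≤ phiFun (x/2-δ) * phiFun (β-x/2+δ) := by
    rw [phiFun, phiFun]; exact pair_le hA hB hA'nn hB'nn s1
  have p2 : (sw*cX*cY) ^ (x/2+δ) * (cw*cX*sY) ^ (1-β-x/2-δ)
      ≤ phiFun (x/2+δ) * phiFun (1-β-x/2-δ) := by
    rw [phiFun, phiFun]; exact pair_le hC hD hC'nn hD'nn s2
  have hcol := collect sw cw sX cX sY cY (x/2-δ) (β-x/2+δ) (x/2+δ) (1-β-x/2-δ)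
      hsw.le hcw.le hsX hcX.le hsY hcY.le hA hB hC hD
  rw [show x/2-δ + (x/2+δ) = x from by ring,
    show β-x/2+δ + (1-β-x/2-δ) = 1-x from by ring,
    show x/2-δ + (β-x/2+δ) = β from by ring,
    show x/2+δ + (1-β-x/2-δ) = 1-β from by ring,
    show x/2-δ + (1-β-x/2-δ) = 1-β-2*δ from by ring,
    show β-x/2+δ + (x/2+δ) = β+2*δ from by ring] at hcol
  have hsXb : 0 < sX ^ β := rpow_pos' hsX (fun h => by rw [hβ, h, zero_mul])
  have hcXb : 0 < cX ^ (1-β) := Real.rpow_pos_of_pos hcX _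
  have hsYb : 0 < sY ^ (1-β-2*δ) :=
    rpow_pos' hsY (fun h => by linear_combination hβ1 - 2*hδ + (cX*cw + sX*sw)*h)
  have hcYb : 0 < cY ^ (β+2*δ) := Real.rpow_pos_of_pos hcY _
  have hswx : 0 < sw ^ x := Real.rpow_pos_of_pos hsw _
  have hcwx : 0 < cw ^ (1-x) := Real.rpow_pos_of_pos hcw _
  have hYw1 : (0:ℝ) < sY*cw + cY*sw := by positivity
  have hYw2 : (0:ℝ) < cY*cw + sY*sw := by positivity
  have hTlo : 0 < (sY*cw + cY*sw) ^ (1-β) * (cY*cw + sY*sw) ^ β := by positivity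
  have hThi : 0 < sY ^ (1-β-2*δ) * cY ^ (β+2*δ) := mul_pos hsYb hcYb
  have hb : phiFun β = sX ^ β * (cY*cw + sY*sw) ^ β := phi_mul hβ hsX hYw2.le
  have hb1 : phiFun (1-β) = cX ^ (1-β) * (sY*cw + cY*sw) ^ (1-β) := phi_mul hβ1 hcX.le hYw1.le
  have hGpos : 0 < sw^x * (cw^(1-x) * (sX^β * cX^(1-β))) :=
    mul_pos hswx (mul_pos hcwx (mul_pos hsXb hcXb))
  have hNum : sw ^ x * cw ^ (1-x) * phiFun β * phiFun (1-β)
      = (sw^x * (cw^(1-x) * (sX^β * cX^(1-β))))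
        * ((sY*cw + cY*sw)^(1-β) * (cY*cw + sY*sw)^β) := by
    rw [hb, hb1]; ring
  have hZ : sw^x * (cw^(1-x) * (sX^β * (cX^(1-β) * (sY^(1-β-2*δ) * cY^(β+2*δ)))))
      = (sw^x * (cw^(1-x) * (sX^β * cX^(1-β)))) * (sY^(1-β-2*δ) * cY^(β+2*δ)) := by ring
  have hNpos : 0 < sw ^ x * cw ^ (1-x) * phiFun β * phiFun (1-β) := by
    rw [hNum]; exact mul_pos hGpos hTlo
  have hZpos : 0 < sw^x * (cw^(1-x) * (sX^β * (cX^(1-β) * (sY^(1-β-2*δ) * cY^(β+2*δ))))) := by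
    rw [hZ]; exact mul_pos hGpos hThi
  have hφAB : 0 < phiFun (x/2-δ) * phiFun (β-x/2+δ) :=
    mul_pos (phiFun_pos hA) (phiFun_pos hB)
  have hφCD : 0 < phiFun (x/2+δ) * phiFun (1-β-x/2-δ) :=
    mul_pos (phiFun_pos hC) (phiFun_pos hD)
  have hP2nn : (0:ℝ) ≤ (sw*cX*cY) ^ (x/2+δ) * (cw*cX*sY) ^ (1-β-x/2-δ) :=
    mul_nonneg (Real.rpow_nonneg hC'nn _) (Real.rpow_nonneg hD'nn _)
  have hden_eq : phiFun (x/2-δ) * phiFun (β-x/2+δ) * phiFun (x/2+δ) * phiFun (1-β-x/2-δ)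
      = (phiFun (x/2-δ) * phiFun (β-x/2+δ)) * (phiFun (x/2+δ) * phiFun (1-β-x/2-δ)) := by ring
  have hZle : sw^x * (cw^(1-x) * (sX^β * (cX^(1-β) * (sY^(1-β-2*δ) * cY^(β+2*δ)))))
      ≤ phiFun (x/2-δ) * phiFun (β-x/2+δ) * phiFun (x/2+δ) * phiFun (1-β-x/2-δ) := by
    rw [← hcol, hden_eq]
    exact mul_le_mul p1 p2 hP2nn hφAB.le
  have hfinal : (sw ^ x * cw ^ (1-x) * phiFun β * phiFun (1-β)) /
      (sw^x * (cw^(1-x) * (sX^β * (cX^(1-β) * (sY^(1-β-2*δ) * cY^(β+2*δ))))))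
      = ((sY*cw + cY*sw) ^ (1-β) * (cY*cw + sY*sw) ^ β) / (sY ^ (1-β-2*δ) * cY ^ (β+2*δ)) := by
    rw [hNum, hZ, mul_div_mul_left _ _ hGpos.ne']
  refine ⟨?_, ?_, ?_, ?_⟩
  · exact div_pos hNpos (by rw [hden_eq]; exact mul_pos hφAB hφCD)
  · calc (sw ^ x * cw ^ (1-x) * phiFun β * phiFun (1-β)) /
        (phiFun (x/2 - δ) * phiFun (β - x/2 + δ) * phiFun (x/2 + δ) * phiFun (1 - β - x/2 - δ))
        ≤ (sw ^ x * cw ^ (1-x) * phiFun β * phiFun (1-β)) /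
          (sw^x * (cw^(1-x) * (sX^β * (cX^(1-β) * (sY^(1-β-2*δ) * cY^(β+2*δ)))))) :=
          div_le_div_of_nonneg_left hNpos.le hZpos hZle
      _ = _ := hfinal
  · intro hne
    have idC : sw*(cX*cY + sX*sY)/2 + δ = sw*cX*cY := by linear_combination hδ
    have hne2 : sw*cX*cY ≠ x/2 + δ := by
      rw [← idC]; intro hcon; apply hne; linarith
    have p2lt : (sw*cX*cY) ^ (x/2+δ) * (cw*cX*sY) ^ (1-β-x/2-δ)
        < phiFun (x/2+δ) * phiFun (1-β-x/2-δ) := by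
      rw [phiFun, phiFun]; exact pair_lt hC hD hC'nn hD'nn s2 hne2
    have hZlt : sw^x * (cw^(1-x) * (sX^β * (cX^(1-β) * (sY^(1-β-2*δ) * cY^(β+2*δ)))))
        < phiFun (x/2-δ) * phiFun (β-x/2+δ) * phiFun (x/2+δ) * phiFun (1-β-x/2-δ) := by
      rw [← hcol, hden_eq]
      calc (sw*sX*sY) ^ (x/2-δ) * (cw*sX*cY) ^ (β-x/2+δ)
            * ((sw*cX*cY) ^ (x/2+δ) * (cw*cX*sY) ^ (1-β-x/2-δ))
          ≤ (phiFun (x/2-δ) * phiFun (β-x/2+δ))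
            * ((sw*cX*cY) ^ (x/2+δ) * (cw*cX*sY) ^ (1-β-x/2-δ)) :=
            mul_le_mul_of_nonneg_right p1 hP2nn
        _ < (phiFun (x/2-δ) * phiFun (β-x/2+δ)) * (phiFun (x/2+δ) * phiFun (1-β-x/2-δ)) :=
            mul_lt_mul_of_pos_left p2lt hφAB
    calc (sw ^ x * cw ^ (1-x) * phiFun β * phiFun (1-β)) /
        (phiFun (x/2 - δ) * phiFun (β - x/2 + δ) * phiFun (x/2 + δ) * phiFun (1 - β - x/2 - δ))
        < (sw ^ x * cw ^ (1-x) * phiFun β * phiFun (1-β)) /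
          (sw^x * (cw^(1-x) * (sX^β * (cX^(1-β) * (sY^(1-β-2*δ) * cY^(β+2*δ)))))) :=
          div_lt_div_of_pos_left hNpos hZpos hZlt
      _ = _ := hfinal
  · intro heq
    subst heq
    have eA : sw*(cX*cY + sX*sY)/2 - δ = sw*sX*sY := by linear_combination -hδ
    have eB : β - sw*(cX*cY + sX*sY)/2 + δ = cw*sX*cY := by linear_combination hβ + hδ
    have eC : sw*(cX*cY + sX*sY)/2 + δ = sw*cX*cY := by linear_combination hδ
    have eD : 1 - β - sw*(cX*cY + sX*sY)/2 - δ = cw*cX*sY := by linear_combination hβ1 - hδ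
    have hdenZ : phiFun (sw*(cX*cY + sX*sY)/2 - δ) * phiFun (β - sw*(cX*cY + sX*sY)/2 + δ)
        * phiFun (sw*(cX*cY + sX*sY)/2 + δ) * phiFun (1 - β - sw*(cX*cY + sX*sY)/2 - δ)
        = sw^(sw*(cX*cY + sX*sY)) * (cw^(1-sw*(cX*cY + sX*sY)) * (sX^β * (cX^(1-β)
          * (sY^(1-β-2*δ) * cY^(β+2*δ))))) := by
      rw [phi_base eA, phi_base eB, phi_base eC, phi_base eD]
      linear_combination hcol
    rw [hdenZ]
    exact hfinal

lemma bridge (E u v β δ : ℝ) (hE1 : Real.sinh E = 1) (hu : -E ≤ u) (hv : v ≤ E) (huv : u < v)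
    (hβ : β = (1 + Real.sinh u) / 2) (hδ : δ = (Real.sinh v - Real.sinh u) / 4) :
    (0 ≤ (Real.sinh ((v-u)/2) * Real.cosh (E - (v-u)/2)) / 2 - δ ∧
      0 ≤ β - (Real.sinh ((v-u)/2) * Real.cosh (E - (v-u)/2)) / 2 + δ ∧
      0 ≤ 1 - β - (Real.sinh ((v-u)/2) * Real.cosh (E - (v-u)/2)) / 2 - δ) ∧
    ∀ x : ℝ, 0 ≤ x/2 - δ → 0 ≤ β - x/2 + δ → 0 ≤ 1 - β - x/2 - δ →
      0 < (Real.sinh ((v-u)/2) ^ x * Real.cosh ((v-u)/2) ^ (1-x) * phiFun β * phiFun (1-β)) /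
          (phiFun (x/2 - δ) * phiFun (β - x/2 + δ) * phiFun (x/2 + δ) *
            phiFun (1 - β - x/2 - δ)) ∧
      (Real.sinh ((v-u)/2) ^ x * Real.cosh ((v-u)/2) ^ (1-x) * phiFun β * phiFun (1-β)) /
          (phiFun (x/2 - δ) * phiFun (β - x/2 + δ) * phiFun (x/2 + δ) *
            phiFun (1 - β - x/2 - δ))
        ≤ (Real.sinh ((E-u)/2) ^ (1-β) * Real.cosh ((E-u)/2) ^ β) /
            (Real.sinh ((E-v)/2) ^ (1-β-2*δ) * Real.cosh ((E-v)/2) ^ (β+2*δ)) ∧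
      (x ≠ Real.sinh ((v-u)/2) * Real.cosh (E - (v-u)/2) →
        (Real.sinh ((v-u)/2) ^ x * Real.cosh ((v-u)/2) ^ (1-x) * phiFun β * phiFun (1-β)) /
          (phiFun (x/2 - δ) * phiFun (β - x/2 + δ) * phiFun (x/2 + δ) *
            phiFun (1 - β - x/2 - δ))
        < (Real.sinh ((E-u)/2) ^ (1-β) * Real.cosh ((E-u)/2) ^ β) /
            (Real.sinh ((E-v)/2) ^ (1-β-2*δ) * Real.cosh ((E-v)/2) ^ (β+2*δ))) ∧
      (x = Real.sinh ((v-u)/2) * Real.cosh (E - (v-u)/2) →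
        (Real.sinh ((v-u)/2) ^ x * Real.cosh ((v-u)/2) ^ (1-x) * phiFun β * phiFun (1-β)) /
          (phiFun (x/2 - δ) * phiFun (β - x/2 + δ) * phiFun (x/2 + δ) *
            phiFun (1 - β - x/2 - δ))
        = (Real.sinh ((E-u)/2) ^ (1-β) * Real.cosh ((E-u)/2) ^ β) /
            (Real.sinh ((E-v)/2) ^ (1-β-2*δ) * Real.cosh ((E-v)/2) ^ (β+2*δ))) := by
  have hδ0 : 0 < δ := by
    have := Real.sinh_lt_sinh.2 huv
    rw [hδ]; linarith
  have hsw : 0 < Real.sinh ((v-u)/2) := Real.sinh_pos_iff.2 (by linarith)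
  have hcw : 0 < Real.cosh ((v-u)/2) := Real.cosh_pos _
  have hsX : 0 ≤ Real.sinh ((E+u)/2) := Real.sinh_nonneg_iff.2 (by linarith)
  have hcX : 0 < Real.cosh ((E+u)/2) := Real.cosh_pos _
  have hsY : 0 ≤ Real.sinh ((E-v)/2) := Real.sinh_nonneg_iff.2 (by linarith)
  have hcY : 0 < Real.cosh ((E-v)/2) := Real.cosh_pos _
  have k1 : Real.sinh ((E+u)/2 + (E-v)/2 + (v-u)/2) = 1 := by
    rw [show (E+u)/2 + (E-v)/2 + (v-u)/2 = E from by ring]; exact hE1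
  have k2 : Real.sinh ((E+u)/2 - (E-v)/2 - (v-u)/2) = 2*β - 1 := by
    rw [show (E+u)/2 - (E-v)/2 - (v-u)/2 = u from by ring, hβ]; ring
  have k3 : Real.sinh ((E+u)/2 - (E-v)/2 + (v-u)/2) = 4*δ + 2*β - 1 := by
    rw [show (E+u)/2 - (E-v)/2 + (v-u)/2 = v from by ring, hβ, hδ]; ring
  simp only [Real.sinh_add, Real.sinh_sub, Real.cosh_add, Real.cosh_sub] at k1 k2 k3
  have hβcore : β = Real.sinh ((E+u)/2) *
      (Real.cosh ((E-v)/2) * Real.cosh ((v-u)/2) + Real.sinh ((E-v)/2) * Real.sinh ((v-u)/2)) := by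
    linear_combination (-1/2 : ℝ) * k1 - (1/2 : ℝ) * k2
  have hβ1core : 1 - β = Real.cosh ((E+u)/2) *
      (Real.sinh ((E-v)/2) * Real.cosh ((v-u)/2) + Real.cosh ((E-v)/2) * Real.sinh ((v-u)/2)) := by
    linear_combination (-1/2 : ℝ) * k1 + (1/2 : ℝ) * k2
  have hδcore : δ = (Real.cosh ((E+u)/2) * Real.cosh ((E-v)/2) -
      Real.sinh ((E+u)/2) * Real.sinh ((E-v)/2)) * Real.sinh ((v-u)/2) / 2 := by
    linear_combination (-1/4 : ℝ) * k3 + (1/4 : ℝ) * k2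
  have q3 : Real.cosh (E - (v-u)/2) = Real.cosh ((E+u)/2) * Real.cosh ((E-v)/2) +
      Real.sinh ((E+u)/2) * Real.sinh ((E-v)/2) := by
    rw [show E - (v-u)/2 = (E+u)/2 + (E-v)/2 from by ring, Real.cosh_add]
  have q1 : Real.sinh ((E-u)/2) = Real.sinh ((E-v)/2) * Real.cosh ((v-u)/2) +
      Real.cosh ((E-v)/2) * Real.sinh ((v-u)/2) := by
    rw [show (E-u)/2 = (E-v)/2 + (v-u)/2 from by ring, Real.sinh_add]
  have q2 : Real.cosh ((E-u)/2) = Real.cosh ((E-v)/2) * Real.cosh ((v-u)/2) +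
      Real.sinh ((E-v)/2) * Real.sinh ((v-u)/2) := by
    rw [show (E-u)/2 = (E-v)/2 + (v-u)/2 from by ring, Real.cosh_add]
  constructor
  · rw [q3]
    refine ⟨?_, ?_, ?_⟩
    · rw [show Real.sinh ((v-u)/2) * (Real.cosh ((E+u)/2) * Real.cosh ((E-v)/2) +
          Real.sinh ((E+u)/2) * Real.sinh ((E-v)/2)) / 2 - δ
          = Real.sinh ((v-u)/2) * Real.sinh ((E+u)/2) * Real.sinh ((E-v)/2) from by
        linear_combination -hδcore]
      exact mul_nonneg (mul_nonneg hsw.le hsX) hsY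
    · rw [show β - Real.sinh ((v-u)/2) * (Real.cosh ((E+u)/2) * Real.cosh ((E-v)/2) +
          Real.sinh ((E+u)/2) * Real.sinh ((E-v)/2)) / 2 + δ
          = Real.cosh ((v-u)/2) * Real.sinh ((E+u)/2) * Real.cosh ((E-v)/2) from by
        linear_combination hβcore + hδcore]
      exact mul_nonneg (mul_nonneg hcw.le hsX) hcY.le
    · rw [show 1 - β - Real.sinh ((v-u)/2) * (Real.cosh ((E+u)/2) * Real.cosh ((E-v)/2) +
          Real.sinh ((E+u)/2) * Real.sinh ((E-v)/2)) / 2 - δ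
          = Real.cosh ((v-u)/2) * Real.cosh ((E+u)/2) * Real.sinh ((E-v)/2) from by
        linear_combination hβ1core - hδcore]
      exact mul_nonneg (mul_nonneg hcw.le hcX.le) hsY
  · intro x hA hB hD
    have H := core (Real.sinh ((v-u)/2)) (Real.cosh ((v-u)/2)) (Real.sinh ((E+u)/2))
      (Real.cosh ((E+u)/2)) (Real.sinh ((E-v)/2)) (Real.cosh ((E-v)/2)) β δ x
      hsw hcw hsX hcX hsY hcY hβcore hβ1core hδcore hδ0 hA hB hD
    rw [q1, q2, q3]
    exact H

noncomputable def Tk (K k : ℕ) : ℝ :=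
  Real.sinh ((groundE - Real.arsinh (2 * (k : ℝ) / (K : ℝ) - 1)) / 2) ^ (1 - (k : ℝ) / (K : ℝ)) *
    Real.cosh ((groundE - Real.arsinh (2 * (k : ℝ) / (K : ℝ) - 1)) / 2) ^ ((k : ℝ) / (K : ℝ))

lemma Tk_pos (K k : ℕ) (hK : 1 ≤ K) (hk : k ≤ K) : 0 < Tk K k := by
  have hK0 : (0:ℝ) < (K:ℝ) := by exact_mod_cast Nat.pos_of_ne_zero (by omega)
  have hkK : (k:ℝ) ≤ (K:ℝ) := by exact_mod_cast hk
  have hvE : Real.arsinh (2*(k:ℝ)/(K:ℝ) - 1) ≤ groundE := by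
    rw [groundE_eq]
    apply Real.arsinh_le_arsinh.2
    have h2 : 2 * (k:ℝ) / (K:ℝ) ≤ 2 := by rw [div_le_iff₀ hK0]; linarith
    linarith
  have harg : 0 ≤ (groundE - Real.arsinh (2*(k:ℝ)/(K:ℝ) - 1))/2 := by linarith
  have hs : 0 ≤ Real.sinh ((groundE - Real.arsinh (2*(k:ℝ)/(K:ℝ) - 1))/2) :=
    Real.sinh_nonneg_iff.2 harg
  rw [Tk]
  apply mul_pos
  · apply rpow_pos' hs
    intro h
    have h2 : (groundE - Real.arsinh (2*(k:ℝ)/(K:ℝ) - 1))/2 = 0 := Real.sinh_eq_zero.1 h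
    have h3 : Real.arsinh (2*(k:ℝ)/(K:ℝ) - 1) = groundE := by linarith
    have h4 : 2*(k:ℝ)/(K:ℝ) - 1 = 1 := by
      rw [← Real.sinh_arsinh (2*(k:ℝ)/(K:ℝ) - 1), h3, sinh_groundE]
    have h5 : 2*((k:ℝ)/(K:ℝ)) = 2 := by rw [← mul_div_assoc]; linarith
    linarith
  · exact Real.rpow_pos_of_pos (Real.cosh_pos _) _

lemma Tk_zero (K : ℕ) (hK : 1 ≤ K) : Tk K 0 = 1 := by
  rw [Tk]
  norm_num
  rw [← groundE_eq, show (groundE + groundE)/2 = groundE from by ring, sinh_groundE]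

lemma Tk_last (K : ℕ) (hK : 1 ≤ K) : Tk K K = 1 := by
  have hK0 : (K:ℝ) ≠ 0 := by
    have : (0:ℝ) < (K:ℝ) := by exact_mod_cast Nat.pos_of_ne_zero (by omega)
    exact this.ne'
  rw [Tk, show 2 * (K:ℝ)/(K:ℝ) - 1 = 1 from by rw [mul_div_assoc, div_self hK0]; norm_num,
    ← groundE_eq, show (groundE - groundE)/2 = 0 from by ring,
    show 1 - (K:ℝ)/(K:ℝ) = 0 from by rw [div_self hK0]; ring,
    Real.sinh_zero, Real.cosh_zero, Real.rpow_zero, Real.one_rpow]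
  norm_num


lemma coord (K i : ℕ) (hK : 1 ≤ K) (hi : i < K) :
    (0 ≤ (Real.sinh (aseq K (i+1) * groundE) * Real.cosh ((1 - aseq K (i+1)) * groundE)) / 2
        - 1/(2*(K:ℝ)) ∧
      0 ≤ (i:ℝ)/(K:ℝ) - (Real.sinh (aseq K (i+1) * groundE) *
        Real.cosh ((1 - aseq K (i+1)) * groundE)) / 2 + 1/(2*(K:ℝ)) ∧
      0 ≤ 1 - (i:ℝ)/(K:ℝ) - (Real.sinh (aseq K (i+1) * groundE) *
        Real.cosh ((1 - aseq K (i+1)) * groundE)) / 2 - 1/(2*(K:ℝ))) ∧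
    ∀ x : ℝ, 0 ≤ x/2 - 1/(2*(K:ℝ)) → 0 ≤ (i:ℝ)/(K:ℝ) - x/2 + 1/(2*(K:ℝ)) →
      0 ≤ 1 - (i:ℝ)/(K:ℝ) - x/2 - 1/(2*(K:ℝ)) →
      0 < gFun K (i+1) x ∧ gFun K (i+1) x ≤ Tk K i / Tk K (i+1) ∧
      (x ≠ Real.sinh (aseq K (i+1) * groundE) * Real.cosh ((1 - aseq K (i+1)) * groundE) →
        gFun K (i+1) x < Tk K i / Tk K (i+1)) ∧
      (x = Real.sinh (aseq K (i+1) * groundE) * Real.cosh ((1 - aseq K (i+1)) * groundE) →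
        gFun K (i+1) x = Tk K i / Tk K (i+1)) := by
  have hK0 : (0:ℝ) < (K:ℝ) := by exact_mod_cast Nat.pos_of_ne_zero (by omega)
  have hE0 : groundE ≠ 0 := groundE_pos.ne'
  have haseq : aseq K (i+1) * groundE
      = (Real.arsinh (2 * ((i+1 : ℕ) : ℝ) / (K : ℝ) - 1)
          - Real.arsinh (2 * (i : ℝ) / (K : ℝ) - 1)) / 2 := by
    rw [aseq, Nat.add_sub_cancel, abar, abar]
    field_simp
    ring
  have hcoshE : (1 - aseq K (i+1)) * groundE
      = groundE - (Real.arsinh (2 * ((i+1 : ℕ) : ℝ) / (K : ℝ) - 1)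
          - Real.arsinh (2 * (i : ℝ) / (K : ℝ) - 1)) / 2 := by
    rw [sub_mul, one_mul, haseq]
  have huE : -groundE ≤ Real.arsinh (2 * (i : ℝ) / (K : ℝ) - 1) := by
    rw [groundE_eq, ← Real.arsinh_neg]
    apply Real.arsinh_le_arsinh.2
    have : 0 ≤ 2 * (i:ℝ) / (K:ℝ) := by positivity
    linarith
  have hvE : Real.arsinh (2 * ((i+1 : ℕ) : ℝ) / (K : ℝ) - 1) ≤ groundE := by
    rw [groundE_eq]
    apply Real.arsinh_le_arsinh.2
    have h1 : ((i+1:ℕ):ℝ) ≤ (K:ℝ) := by exact_mod_cast hi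
    have h2 : 2 * ((i+1:ℕ):ℝ) / (K:ℝ) ≤ 2 := by rw [div_le_iff₀ hK0]; linarith
    linarith
  have huv : Real.arsinh (2 * (i : ℝ) / (K : ℝ) - 1)
      < Real.arsinh (2 * ((i+1 : ℕ) : ℝ) / (K : ℝ) - 1) := by
    apply Real.arsinh_lt_arsinh.2
    push_cast
    rw [sub_lt_sub_iff_right, div_lt_div_iff_of_pos_right hK0]
    linarith
  have hbeta : (i:ℝ)/(K:ℝ) = (1 + Real.sinh (Real.arsinh (2 * (i : ℝ) / (K : ℝ) - 1))) / 2 := by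
    rw [Real.sinh_arsinh]; ring
  have hdelta : 1/(2*(K:ℝ)) = (Real.sinh (Real.arsinh (2 * ((i+1 : ℕ) : ℝ) / (K : ℝ) - 1))
      - Real.sinh (Real.arsinh (2 * (i : ℝ) / (K : ℝ) - 1))) / 4 := by
    rw [Real.sinh_arsinh, Real.sinh_arsinh]; push_cast; ring
  have hB := bridge groundE (Real.arsinh (2 * (i : ℝ) / (K : ℝ) - 1))
    (Real.arsinh (2 * ((i+1 : ℕ) : ℝ) / (K : ℝ) - 1)) ((i:ℝ)/(K:ℝ)) (1/(2*(K:ℝ)))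
    sinh_groundE huE hvE huv hbeta hdelta
  have hc : ((i+1:ℕ):ℝ) - 1 = (i:ℝ) := by push_cast; ring
  have hgf : ∀ x : ℝ, gFun K (i+1) x
      = (Real.sinh ((Real.arsinh (2 * ((i+1 : ℕ) : ℝ) / (K : ℝ) - 1)
          - Real.arsinh (2 * (i : ℝ) / (K : ℝ) - 1)) / 2) ^ x *
        Real.cosh ((Real.arsinh (2 * ((i+1 : ℕ) : ℝ) / (K : ℝ) - 1)
          - Real.arsinh (2 * (i : ℝ) / (K : ℝ) - 1)) / 2) ^ (1-x) *
        phiFun ((i:ℝ)/(K:ℝ)) * phiFun (1 - (i:ℝ)/(K:ℝ))) /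
        (phiFun (x/2 - 1/(2*(K:ℝ))) * phiFun ((i:ℝ)/(K:ℝ) - x/2 + 1/(2*(K:ℝ))) *
          phiFun (x/2 + 1/(2*(K:ℝ))) * phiFun (1 - (i:ℝ)/(K:ℝ) - x/2 - 1/(2*(K:ℝ)))) := by
    intro x
    rw [gFun, haseq, hc]
  have hTk : Tk K i / Tk K (i+1)
      = (Real.sinh ((groundE - Real.arsinh (2 * (i : ℝ) / (K : ℝ) - 1))/2) ^ (1 - (i:ℝ)/(K:ℝ)) *
          Real.cosh ((groundE - Real.arsinh (2 * (i : ℝ) / (K : ℝ) - 1))/2) ^ ((i:ℝ)/(K:ℝ))) /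
        (Real.sinh ((groundE - Real.arsinh (2 * ((i+1 : ℕ) : ℝ) / (K : ℝ) - 1))/2)
            ^ (1 - (i:ℝ)/(K:ℝ) - 2*(1/(2*(K:ℝ)))) *
          Real.cosh ((groundE - Real.arsinh (2 * ((i+1 : ℕ) : ℝ) / (K : ℝ) - 1))/2)
            ^ ((i:ℝ)/(K:ℝ) + 2*(1/(2*(K:ℝ))))) := by
    rw [Tk, Tk,
      show (1:ℝ) - ((i+1:ℕ):ℝ)/(K:ℝ) = 1 - (i:ℝ)/(K:ℝ) - 2*(1/(2*(K:ℝ))) from by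
        push_cast; field_simp; ring,
      show ((i+1:ℕ):ℝ)/(K:ℝ) = (i:ℝ)/(K:ℝ) + 2*(1/(2*(K:ℝ))) from by
        push_cast; field_simp]
  constructor
  · rw [haseq, hcoshE]
    exact hB.1
  · intro x h1 h2 h3
    have hB2 := hB.2 x h1 h2 h3
    rw [hgf x, hTk, haseq, hcoshE]
    exact ⟨hB2.1, hB2.2.1, hB2.2.2.1, hB2.2.2.2⟩

lemma tele_aux (K : ℕ) (hK : 1 ≤ K) :
    ∀ n, n ≤ K → ∏ j ∈ Finset.range n, (Tk K j / Tk K (j+1)) = Tk K 0 / Tk K n := by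
  intro n
  induction n with
  | zero =>
      intro _
      rw [Finset.prod_range_zero, eq_comm, div_self (Tk_pos K 0 hK (by omega)).ne']
  | succ m ih =>
      intro h
      rw [Finset.prod_range_succ, ih (by omega)]
      have h1 : Tk K m ≠ 0 := (Tk_pos K m hK (by omega)).ne'
      have h2 : Tk K (m+1) ≠ 0 := (Tk_pos K (m+1) hK (by omega)).ne'
      field_simp

lemma tele (K : ℕ) (hK : 1 ≤ K) : ∏ i : Fin K, (Tk K (i:ℕ) / Tk K ((i:ℕ)+1)) = 1 := by
  rw [Fin.prod_univ_eq_prod_range (fun j => Tk K j / Tk K (j+1)) K,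
    tele_aux K hK K le_rfl, Tk_zero K hK, Tk_last K hK]
  norm_num

/-- **Optimal Hamming distance (Theorem 2.1)**: `𝖽` is admissible, `F(𝖽) = 1`, and `F(d) < 1`
for every admissible `d ≠ 𝖽`. -/
theorem optimal_hamming_distance (K : ℕ) (hK : 1 ≤ K) :
    Admissible K (dOpt K) ∧ Ffun K (dOpt K) = 1 ∧
      ∀ d : Fin K → ℝ, Admissible K d → d ≠ dOpt K → Ffun K d < 1 := by
  have hadm : Admissible K (dOpt K) := by
    intro i
    exact (coord K (i:ℕ) hK i.2).1
  refine ⟨hadm, ?_, ?_⟩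
  · rw [Ffun, ← tele K hK]
    apply Finset.prod_congr rfl
    intro i _
    obtain ⟨h1, h2, h3⟩ := hadm i
    exact ((coord K (i:ℕ) hK i.2).2 (dOpt K i) h1 h2 h3).2.2.2 rfl
  · intro d hd hne
    obtain ⟨i0, hi0⟩ := Function.ne_iff.1 hne
    rw [Ffun, ← tele K hK]
    apply Finset.prod_lt_prod
    · intro i _
      obtain ⟨h1, h2, h3⟩ := hd i
      exact ((coord K (i:ℕ) hK i.2).2 (d i) h1 h2 h3).1
    · intro i _
      obtain ⟨h1, h2, h3⟩ := hd i
      exact ((coord K (i:ℕ) hK i.2).2 (d i) h1 h2 h3).2.1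
    · refine ⟨i0, Finset.mem_univ _, ?_⟩
      obtain ⟨h1, h2, h3⟩ := hd i0
      exact ((coord K (i0:ℕ) hK i0.2).2 (d i0) h1 h2 h3).2.2.1 hi0
end

section
/- Let l, k be integers with 1 ≤ k ≤ l, let ξ_1,…,ξ_{2l−k} be mutually independent rate-1 exponential random variables, and set X := Σ_{i=1}^{l} ξ_i and X' := Σ_{i=1}^{k} ξ_i + Σ_{i=l+1}^{2l−k} ξ_i (so X and X' are each sums of l of the variables, sharing exactly k common summands). Then for every real x > 0, with B := (2(l−k))! / ((2l−k)! · ((l−k)!)²): e^{−2x} · B · x^{2l−k} ≤ P(X ≤ x and X' ≤ x) ≤ B · x^{2l−k}. -/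
open MeasureTheory ProbabilityTheory Finset Real


lemma ite_and_one (P Q : Prop) [Decidable P] [Decidable Q] :
    (if P ∧ Q then (1:ENNReal) else 0) = (if P then 1 else 0) * (if Q then 1 else 0) := by
  by_cases hP : P <;> by_cases hQ : Q <;> simp [hP, hQ]

lemma lint_if_set {p : ℝ → Prop} [DecidablePred p] (hp : MeasurableSet {a | p a}) (g : ℝ → ENNReal) :
    ∫⁻ a, (if p a then 1 else 0) * g a = ∫⁻ a in {a | p a}, g a := by
  rw [← lintegral_indicator hp]
  congr 1; ext a
  by_cases h : p a <;> simp [h, Set.indicator_apply, Set.mem_setOf_eq]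

lemma lint_Ioc_pow (j : ℕ) {c : ℝ} (hc : 0 ≤ c) :
    ∫⁻ s in Set.Ioc (0:ℝ) c, ENNReal.ofReal (s ^ j / (Nat.factorial j)) =
      ENNReal.ofReal (c ^ (j+1) / (Nat.factorial (j+1))) := by
  rw [← ofReal_integral_eq_lintegral_ofReal]
  · congr 1
    rw [← intervalIntegral.integral_of_le hc, intervalIntegral.integral_div, integral_pow]
    rw [Nat.factorial_succ]
    push_cast
    have h1 : (0:ℝ) < (j:ℝ) + 1 := by positivity
    have h2 : (0:ℝ) < (Nat.factorial j : ℝ) := by positivity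
    field_simp
    simp
  · exact (intervalIntegrable_iff_integrableOn_Ioc_of_le hc).1
      ((intervalIntegral.intervalIntegrable_pow j).div_const _)
  · filter_upwards [ae_restrict_mem measurableSet_Ioc] with s hs
    have := hs.1
    positivity


lemma beta_nat (a b : ℕ) :
    ∫ s in (0:ℝ)..1, s ^ a * (1 - s) ^ b =
      (Nat.factorial a * Nat.factorial b : ℝ) / Nat.factorial (a + b + 1) := by
  have ha : 0 < ((a:ℂ) + 1).re := by simp; positivity
  have hb : 0 < ((b:ℂ) + 1).re := by simp; positivity
  have h := Complex.Gamma_mul_Gamma_eq_betaIntegral ha hb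
  have hβ : Complex.betaIntegral ((a:ℂ)+1) ((b:ℂ)+1) =
      ((∫ s in (0:ℝ)..1, s ^ a * (1 - s) ^ b : ℝ) : ℂ) := by
    rw [Complex.betaIntegral, ← intervalIntegral.integral_ofReal]
    refine intervalIntegral.integral_congr fun s hs => ?_
    simp only [add_sub_cancel_right]
    rw [show ((a:ℂ)) = ((a : ℕ) : ℂ) by norm_num, show ((b:ℂ)) = ((b : ℕ) : ℂ) by norm_num,
      Complex.cpow_natCast, Complex.cpow_natCast]
    push_cast
    ring
  rw [hβ] at h
  have hg1 : Complex.Gamma ((a:ℂ)+1) = (Nat.factorial a : ℂ) := Complex.Gamma_nat_eq_factorial a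
  have hg2 : Complex.Gamma ((b:ℂ)+1) = (Nat.factorial b : ℂ) := Complex.Gamma_nat_eq_factorial b
  have hg3 : Complex.Gamma ((a:ℂ)+1 + ((b:ℂ)+1)) = (Nat.factorial (a+b+1) : ℂ) := by
    have : ((a:ℂ)+1 + ((b:ℂ)+1)) = ((a+b+1 : ℕ) : ℂ) + 1 := by push_cast; ring
    rw [this, Complex.Gamma_nat_eq_factorial]
  rw [hg1, hg2, hg3] at h
  have hne : (Nat.factorial (a+b+1) : ℂ) ≠ 0 :=
    Nat.cast_ne_zero.2 (Nat.factorial_ne_zero _)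
  field_simp
  have := h.symm
  rw [mul_comm] at this
  exact_mod_cast this

lemma beta_scaled (a b : ℕ) {x : ℝ} (hx : 0 < x) :
    ∫ y in (0:ℝ)..x, y ^ a * (x - y) ^ b =
      (Nat.factorial a * Nat.factorial b : ℝ) / Nat.factorial (a + b + 1) * x ^ (a + b + 1) := by
  have h := intervalIntegral.integral_comp_mul_left (a := 0) (b := 1)
    (fun y => y ^ a * (x - y) ^ b) (ne_of_gt hx)
  simp only [mul_zero, mul_one] at h
  have h2 : ∫ s in (0:ℝ)..1, (x*s) ^ a * (x - x*s) ^ b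
      = x^(a+b) * ∫ s in (0:ℝ)..1, s ^ a * (1-s) ^ b := by
    rw [← intervalIntegral.integral_const_mul]
    refine intervalIntegral.integral_congr fun s hs => ?_
    have : x - x * s = x * (1 - s) := by ring
    rw [this, mul_pow, mul_pow, pow_add]
    ring
  rw [h2, beta_nat] at h
  have := congrArg (fun z => x * z) h
  have hx' : x ≠ 0 := ne_of_gt hx
  rw [smul_eq_mul, ← mul_assoc, ← mul_assoc, mul_inv_cancel₀ hx', one_mul] at this
  rw [← this, pow_succ, pow_add]
  ring



lemma lint_beta (a b : ℕ) {x : ℝ} (hx : 0 < x) :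
    ∫⁻ y in Set.Ioc (0:ℝ) x, ENNReal.ofReal (y ^ a * (x - y) ^ b) =
      ENNReal.ofReal ((Nat.factorial a * Nat.factorial b : ℝ) / Nat.factorial (a + b + 1)
        * x ^ (a + b + 1)) := by
  rw [← ofReal_integral_eq_lintegral_ofReal]
  · rw [← intervalIntegral.integral_of_le hx.le, beta_scaled a b hx]
  · exact (intervalIntegrable_iff_integrableOn_Ioc_of_le hx.le).1
      (((continuous_pow a).mul ((continuous_const.sub continuous_id).pow b)).intervalIntegrable 0 x)
  · filter_upwards [ae_restrict_mem measurableSet_Ioc] with s hs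
    have h1 := hs.1
    have h2 := hs.2
    have : 0 ≤ x - s := by linarith
    positivity

/-- lintegral against expMeasure 1 as weighted Lebesgue integral on (0,∞). -/
lemma lint_exp (f : ℝ → ENNReal) (hf : Measurable f) :
    ∫⁻ s, f s ∂(expMeasure 1) =
      ∫⁻ s in Set.Ioi (0:ℝ), f s * ENNReal.ofReal (Real.exp (-s)) := by
  have hpdf : gammaPDF 1 1 = exponentialPDF 1 := rfl
  rw [expMeasure, gammaMeasure, lintegral_withDensity_eq_lintegral_mul _ _ hf]
  · rw [← lintegral_add_compl (fun a => (gammaPDF 1 1 * f) a) (measurableSet_Ici (a := (0:ℝ)))]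
    have hIio : ∫⁻ s in (Set.Ici (0:ℝ))ᶜ, (gammaPDF 1 1 * f) s = 0 := by
      rw [show (Set.Ici (0:ℝ))ᶜ = Set.Iio 0 by simp]
      rw [setLIntegral_congr_fun measurableSet_Iio
        ((fun s hs => ?_)), lintegral_zero]
      simp only [Pi.mul_apply, gammaPDF_of_neg hs, zero_mul]
    rw [hIio, add_zero, Measure.restrict_congr_set Ioi_ae_eq_Ici.symm]
    refine setLIntegral_congr_fun measurableSet_Ioi
      ((fun s hs => ?_))
    simp only [Pi.mul_apply, hpdf]
    rw [exponentialPDF_of_nonneg (le_of_lt hs)]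
    rw [one_mul, mul_comm]
    norm_num
  · exact (measurable_gammaPDFReal 1 1).ennreal_ofReal

lemma measurable_rho (j : ℕ) : Measurable (fun s : ℝ => ENNReal.ofReal (s ^ j / Nat.factorial j)) :=
  (((measurable_id.pow_const j).div_const _)).ennreal_ofReal

lemma measurable_expennr : Measurable (fun s : ℝ => ENNReal.ofReal (Real.exp (-s))) :=
  (Real.measurable_exp.comp measurable_neg).ennreal_ofReal


lemma lint_Ioi_eq (u : ℝ) (g : ℝ → ENNReal) :
    ∫⁻ a in Set.Ioi u, g a = ∫⁻ a, (if u < a then 1 else 0) * g a := by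
  rw [← lintegral_indicator measurableSet_Ioi]
  refine lintegral_congr fun a => ?_
  by_cases h : u < a <;> simp [Set.indicator_apply, h]

lemma lint_shift (g : ℝ → ENNReal) (u : ℝ) :
    ∫⁻ s in Set.Ioi (0:ℝ), g (u + s) = ∫⁻ r in Set.Ioi u, g r := by
  have mp : MeasurePreserving (fun s : ℝ => u + s) volume volume :=
    measurePreserving_add_left volume u
  have emb : MeasurableEmbedding (fun s : ℝ => u + s) :=
    (MeasurableEquiv.addLeft u).measurableEmbedding
  have hpre : (fun s : ℝ => u + s) ⁻¹' Set.Ioi u = Set.Ioi 0 := by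
    ext s; simp
  rw [← hpre, mp.setLIntegral_comp_preimage_emb emb]

lemma lint_Ioo_sub_pow (j : ℕ) {r : ℝ} (hr : 0 < r) :
    ∫⁻ u in Set.Ioo (0:ℝ) r, ENNReal.ofReal ((r - u) ^ j / (Nat.factorial j)) =
      ENNReal.ofReal (r ^ (j+1) / (Nat.factorial (j+1))) := by
  rw [← ofReal_integral_eq_lintegral_ofReal]
  · congr 1
    rw [← integral_Ioc_eq_integral_Ioo, ← intervalIntegral.integral_of_le hr.le,
      intervalIntegral.integral_div, intervalIntegral.integral_comp_sub_left (fun v => v ^ j) r]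
    simp only [sub_self, sub_zero]
    rw [integral_pow, Nat.factorial_succ]
    push_cast
    have h1 : (0:ℝ) < (j:ℝ) + 1 := by positivity
    have h2 : (0:ℝ) < (Nat.factorial j : ℝ) := by positivity
    field_simp
    simp
  · refine ((intervalIntegrable_iff_integrableOn_Ioc_of_le hr.le).1
      ((((continuous_const.sub continuous_id).pow j).div_const _).intervalIntegrable 0 r)).mono_set
      Set.Ioo_subset_Ioc_self
  · filter_upwards [ae_restrict_mem measurableSet_Ioo] with s hs
    have h2 := hs.2
    have : 0 ≤ r - s := by linarith
    positivity

lemma exp_R : ∀ (j : ℕ) (f : ℝ → ENNReal), Measurable f →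
    (∫⁻ t : Fin (j+1) → ℝ, f (∑ i, t i) ∂(Measure.pi fun _ => expMeasure 1))
      = ∫⁻ s in Set.Ioi (0:ℝ), f s * ENNReal.ofReal (s ^ j / (Nat.factorial j))
          * ENNReal.ofReal (Real.exp (-s)) := by
  intro j
  induction j with
  | zero =>
    intro f hf
    haveI : IsProbabilityMeasure (expMeasure 1) := isProbabilityMeasure_expMeasure one_pos
    have key := (measurePreserving_funUnique (expMeasure 1) (Fin 1)).lintegral_comp hf
    have h1 : ∀ t : Fin 1 → ℝ, (MeasurableEquiv.funUnique (Fin 1) ℝ) t = ∑ i, t i := by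
      intro t
      simp [MeasurableEquiv.funUnique, Fin.sum_univ_one]
    calc ∫⁻ t : Fin 1 → ℝ, f (∑ i, t i) ∂(Measure.pi fun _ => expMeasure 1)
        = ∫⁻ t : Fin 1 → ℝ, f ((MeasurableEquiv.funUnique (Fin 1) ℝ) t)
            ∂(Measure.pi fun _ => expMeasure 1) := by
          refine lintegral_congr fun t => by rw [h1]
      _ = ∫⁻ s, f s ∂(expMeasure 1) := key
      _ = _ := by
          rw [lint_exp f hf]
          refine setLIntegral_congr_fun measurableSet_Ioi
            (fun s hs => ?_)
          simp
  | succ j ih =>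
    intro f hf
    haveI : IsProbabilityMeasure (expMeasure 1) := isProbabilityMeasure_expMeasure one_pos
    set F : ℝ × (Fin (j+1) → ℝ) → ENNReal := fun p => f (p.1 + ∑ i, p.2 i) with hF
    have hFm : Measurable F := hf.comp (measurable_fst.add
      (Finset.measurable_sum univ (fun i _ => (measurable_pi_apply i).comp measurable_snd)))
    have key := (measurePreserving_piFinSuccAbove (fun _ : Fin (j+2) => expMeasure 1) 0).lintegral_comp hFm
    have h1 : ∀ t : Fin (j+2) → ℝ, F ((MeasurableEquiv.piFinSuccAbove (fun _ => ℝ) 0) t) = f (∑ i, t i) := by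
      intro t
      have : (MeasurableEquiv.piFinSuccAbove (fun _ : Fin (j+2) => ℝ) 0) t
          = (t 0, fun i => t ((0 : Fin (j+2)).succAbove i)) := rfl
      rw [this, hF]
      simp only [Fin.succAbove_zero]
      exact congrArg f (Fin.sum_univ_succ t).symm
    have step1 : (∫⁻ t : Fin (j+2) → ℝ, f (∑ i, t i) ∂(Measure.pi fun _ => expMeasure 1))
        = ∫⁻ u, ∫⁻ v : Fin (j+1) → ℝ, f (u + ∑ i, v i)
            ∂(Measure.pi fun _ => expMeasure 1) ∂(expMeasure 1) := by
      rw [← lintegral_prod F hFm.aemeasurable, ← key]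
      exact lintegral_congr fun t => (h1 t).symm
    rw [step1]
    -- outer integrand measurable in u
    have hgm : Measurable (fun u => ∫⁻ v : Fin (j+1) → ℝ, f (u + ∑ i, v i)
        ∂(Measure.pi fun _ => expMeasure 1)) := (by
      have : F = Function.uncurry (fun u v => F (u, v)) := rfl
      rw [this] at hFm
      exact hFm.lintegral_prod_right)
    rw [lint_exp _ hgm]
    -- replace inner integral using ih and shift
    have step2 : ∀ u : ℝ, (∫⁻ v : Fin (j+1) → ℝ, f (u + ∑ i, v i)
        ∂(Measure.pi fun _ => expMeasure 1)) * ENNReal.ofReal (Real.exp (-u))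
        = ∫⁻ r, (if u < r then 1 else 0) *
            (f r * ENNReal.ofReal ((r-u) ^ j / (Nat.factorial j)) * ENNReal.ofReal (Real.exp (-r))) := by
      intro u
      rw [ih (fun s => f (u + s)) (hf.comp (measurable_const.add measurable_id))]
      have hsh : (∫⁻ s in Set.Ioi (0:ℝ), f (u + s) * ENNReal.ofReal (s ^ j / (Nat.factorial j))
            * ENNReal.ofReal (Real.exp (-s)))
          = ∫⁻ r in Set.Ioi u, f r * ENNReal.ofReal ((r - u) ^ j / (Nat.factorial j))
            * ENNReal.ofReal (Real.exp (-(r - u))) := by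
        have := lint_shift (fun r => f r * ENNReal.ofReal ((r - u) ^ j / (Nat.factorial j))
          * ENNReal.ofReal (Real.exp (-(r - u)))) u
        rw [← this]
        exact setLIntegral_congr_fun measurableSet_Ioi (fun s hs => by
          simp only [add_sub_cancel_left])
      rw [hsh, lint_Ioi_eq]
      have hmr : Measurable (fun r => (if u < r then (1:ENNReal) else 0) *
          (f r * ENNReal.ofReal ((r-u) ^ j / (Nat.factorial j))
            * ENNReal.ofReal (Real.exp (-(r-u))))) := by
        refine Measurable.mul (Measurable.ite measurableSet_Ioi measurable_const measurable_const) ?_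
        exact (hf.mul (((measurable_id.sub_const u).pow_const j).div_const _).ennreal_ofReal).mul
          ((Real.measurable_exp.comp (measurable_id.sub_const u).neg).ennreal_ofReal)
      rw [← lintegral_mul_const _ hmr]
      refine lintegral_congr fun r => ?_
      by_cases hur : u < r
      · simp only [hur, if_true, one_mul]
        rw [mul_assoc, mul_assoc, ← ENNReal.ofReal_mul (Real.exp_nonneg _), ← Real.exp_add]
        ring_nf
      · simp [hur]
    rw [setLIntegral_congr_fun measurableSet_Ioi
      (fun u _ => step2 u)]
    rw [lint_Ioi_eq]
    set H : ℝ → ℝ → ENNReal := fun u r => (if 0 < u then 1 else 0) *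
      ((if u < r then 1 else 0) *
        (f r * ENNReal.ofReal ((r-u) ^ j / (Nat.factorial j)) * ENNReal.ofReal (Real.exp (-r)))) with hH
    have hHm : Measurable (Function.uncurry H) := by
      refine Measurable.mul ?_ (Measurable.mul ?_ ?_)
      · exact Measurable.ite (measurableSet_lt measurable_const measurable_fst)
          measurable_const measurable_const
      · exact Measurable.ite (measurableSet_lt measurable_fst measurable_snd)
          measurable_const measurable_const
      · exact ((hf.comp measurable_snd).mul
          (((measurable_snd.sub measurable_fst).pow_const j).div_const _).ennreal_ofReal).mul
          ((Real.measurable_exp.comp measurable_snd.neg).ennreal_ofReal)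
    have hifne : ∀ (P : Prop) (_ : Decidable P), (if P then (1:ENNReal) else 0) ≠ ⊤ := by
      intro P hP
      by_cases h : P <;> simp [h]
    have step3 : (∫⁻ u, (if 0 < u then (1:ENNReal) else 0) *
        ∫⁻ r, (if u < r then 1 else 0) *
          (f r * ENNReal.ofReal ((r-u) ^ j / (Nat.factorial j)) * ENNReal.ofReal (Real.exp (-r))))
        = ∫⁻ u, ∫⁻ r, H u r := by
      refine lintegral_congr fun u => ?_
      rw [← lintegral_const_mul' _ _ (hifne _ _)]
    rw [step3, lintegral_lintegral_swap hHm.aemeasurable]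
    have step4 : ∀ r : ℝ, (∫⁻ u, H u r)
        = ((if 0 < r then 1 else 0) * ENNReal.ofReal (r ^ (j+1) / (Nat.factorial (j+1)))) *
          (f r * ENNReal.ofReal (Real.exp (-r))) := by
      intro r
      have hrw : ∀ u, H u r = ((if 0 < u ∧ u < r then (1:ENNReal) else 0) *
          ENNReal.ofReal ((r-u) ^ j / (Nat.factorial j))) *
          (f r * ENNReal.ofReal (Real.exp (-r))) := by
        intro u
        rw [hH, ite_and_one]
        ring
      simp only [hrw]
      rw [lintegral_mul_const _ (show Measurable (fun u : ℝ =>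
          (if 0 < u ∧ u < r then (1:ENNReal) else 0) *
            ENNReal.ofReal ((r-u) ^ j / (Nat.factorial j))) from
          (Measurable.ite (by exact measurableSet_Ioo : MeasurableSet {a | 0 < a ∧ a < r})
            measurable_const measurable_const).mul
            (((measurable_const.sub measurable_id).pow_const j).div_const _).ennreal_ofReal)]
      congr 1
      rw [lint_if_set (p := fun u => 0 < u ∧ u < r)
        (by exact measurableSet_Ioo : MeasurableSet {a | 0 < a ∧ a < r})]
      by_cases hr : 0 < r
      · rw [if_pos hr, one_mul]
        exact lint_Ioo_sub_pow j hr
      · rw [if_neg hr]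
        rw [show {a : ℝ | 0 < a ∧ a < r} = Set.Ioo 0 r from rfl,
          Set.Ioo_eq_empty hr,
          Measure.restrict_empty, lintegral_zero_measure]
        simp
    simp only [step4]
    have step5 : ∀ r : ℝ, ((if 0 < r then (1:ENNReal) else 0) *
        ENNReal.ofReal (r ^ (j+1) / (Nat.factorial (j+1)))) *
        (f r * ENNReal.ofReal (Real.exp (-r)))
        = (if 0 < r then 1 else 0) *
          (f r * ENNReal.ofReal (r ^ (j+1) / (Nat.factorial (j+1))) * ENNReal.ofReal (Real.exp (-r))) := by
      intro r
      ring
    simp only [step5]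
    rw [← lint_Ioi_eq]


lemma sum_shift {M : Type*} [AddCommMonoid M] (g : ℕ → M) (a b n : ℕ) (hb : b ≤ n) :
    ∑ j ∈ Finset.Icc (a+1) b, g j
      = ∑ i ∈ Finset.univ.filter (fun i : Fin n => a ≤ (i:ℕ) ∧ (i:ℕ) < b), g ((i:ℕ)+1) := by
  refine Finset.sum_bij' (fun j hj => (⟨j - 1, by rw [Finset.mem_Icc] at hj; omega⟩ : Fin n))
    (fun i hi => (i:ℕ)+1) ?_ ?_ ?_ ?_ ?_
  all_goals intro p hp
  all_goals simp only [Finset.mem_Icc, Finset.mem_filter, Finset.mem_univ, true_and] at hp ⊢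
  · omega
  · omega
  · omega
  · ext; simp only []; omega
  · congr 1; omega

lemma joint_law {Ω : Type*} [MeasurableSpace Ω] (μ : Measure Ω) [IsProbabilityMeasure μ]
    (n : ℕ) (ξ : ℕ → Ω → ℝ) (hmeas : ∀ i, Measurable (ξ i))
    (hindep : iIndepFun (fun i : Fin n => ξ ((i : ℕ) + 1)) μ)
    (hexp : ∀ i : Fin n, μ.map (ξ ((i:ℕ)+1)) = expMeasure 1) :
    Measure.map (fun ω (i : Fin n) => ξ ((i:ℕ)+1) ω) μ = Measure.pi (fun _ => expMeasure 1) := by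
  haveI : IsProbabilityMeasure (expMeasure 1) := isProbabilityMeasure_expMeasure one_pos
  have hT : Measurable (fun ω (i : Fin n) => ξ ((i:ℕ)+1) ω) :=
    measurable_pi_lambda _ (fun i => hmeas _)
  refine (Measure.pi_eq fun s hs => ?_).symm
  rw [Measure.map_apply hT (MeasurableSet.univ_pi hs)]
  have hpre : (fun ω (i : Fin n) => ξ ((i:ℕ)+1) ω) ⁻¹' (Set.univ.pi s)
      = ⋂ i ∈ (Finset.univ : Finset (Fin n)), (ξ ((i:ℕ)+1)) ⁻¹' (s i) := by
    ext ω
    simp [Set.mem_univ_pi]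
  rw [hpre, hindep.measure_inter_preimage_eq_mul Finset.univ (fun i _ => hs i)]
  refine Finset.prod_congr rfl fun i _ => ?_
  rw [← Measure.map_apply (hmeas _) (hs i), hexp i]


lemma pi_split (k m n l : ℕ) (hn : n = k + (m + m)) (hl : l = k + m) (x : ℝ) :
    (Measure.pi fun _ : Fin n => expMeasure 1)
      {t : Fin n → ℝ |
        (∑ i ∈ Finset.univ.filter (fun i : Fin n => (i:ℕ) < l), t i) ≤ x ∧
        (∑ i ∈ Finset.univ.filter (fun i : Fin n => (i:ℕ) < k), t i) +
        (∑ i ∈ Finset.univ.filter (fun i : Fin n => l ≤ (i:ℕ)), t i) ≤ x}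
    = ∫⁻ u : Fin k → ℝ, ∫⁻ v : Fin m → ℝ, ∫⁻ w : Fin m → ℝ,
        ((if (∑ i, u i) + (∑ i, v i) ≤ x then 1 else 0) *
         (if (∑ i, u i) + (∑ i, w i) ≤ x then 1 else 0))
        ∂(Measure.pi fun _ => expMeasure 1) ∂(Measure.pi fun _ => expMeasure 1)
        ∂(Measure.pi fun _ => expMeasure 1) := by
  haveI : IsProbabilityMeasure (expMeasure 1) := isProbabilityMeasure_expMeasure one_pos
  set E : Set (Fin n → ℝ) := {t : Fin n → ℝ |
        (∑ i ∈ Finset.univ.filter (fun i : Fin n => (i:ℕ) < l), t i) ≤ x ∧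
        (∑ i ∈ Finset.univ.filter (fun i : Fin n => (i:ℕ) < k), t i) +
        (∑ i ∈ Finset.univ.filter (fun i : Fin n => l ≤ (i:ℕ)), t i) ≤ x} with hEdef
  have hEmeas : MeasurableSet E := by
    refine MeasurableSet.inter ?_ ?_
    · exact measurableSet_le (Finset.measurable_sum _ (fun i _ => measurable_pi_apply i))
        measurable_const
    · exact measurableSet_le ((Finset.measurable_sum _ (fun i _ => measurable_pi_apply i)).add
        (Finset.measurable_sum _ (fun i _ => measurable_pi_apply i))) measurable_const
  -- the index equivalence
  set e : (Fin k ⊕ (Fin m ⊕ Fin m)) ≃ Fin n :=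
    ((Equiv.refl (Fin k)).sumCongr finSumFinEquiv).trans (finSumFinEquiv.trans (finCongr hn.symm))
    with hedef
  have hv1 : ∀ i : Fin k, ((e (Sum.inl i)) : ℕ) = (i : ℕ) := by
    intro i; simp [hedef]; try omega
  have hv2 : ∀ i : Fin m, ((e (Sum.inr (Sum.inl i))) : ℕ) = k + (i : ℕ) := by
    intro i; simp [hedef]; try omega
  have hv3 : ∀ i : Fin m, ((e (Sum.inr (Sum.inr i))) : ℕ) = k + (m + (i : ℕ)) := by
    intro i; simp [hedef]; try omega
  set φe := MeasurableEquiv.piCongrLeft (fun _ : Fin n => ℝ) e with hφdef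
  -- sum decomposition lemmas
  have hgsum : ∀ (g : (Fin k ⊕ (Fin m ⊕ Fin m)) → ℝ) (p : ℕ → Prop) (_ : DecidablePred p),
      ∑ i ∈ Finset.univ.filter (fun i : Fin n => p (i:ℕ)), (φe g) i
        = (∑ i : Fin k, if p ((e (Sum.inl i) : ℕ)) then g (Sum.inl i) else 0)
          + ((∑ i : Fin m, if p ((e (Sum.inr (Sum.inl i)) : ℕ)) then g (Sum.inr (Sum.inl i)) else 0)
          + (∑ i : Fin m, if p ((e (Sum.inr (Sum.inr i)) : ℕ)) then g (Sum.inr (Sum.inr i)) else 0)) := by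
    intro g p hdec
    rw [Finset.sum_filter, ← Equiv.sum_comp e (fun i : Fin n => if p (i:ℕ) then (φe g) i else 0),
      Fintype.sum_sum_type, Fintype.sum_sum_type]
    have happ : ∀ a, (φe g) (e a) = g a := by
      intro a
      rw [hφdef, MeasurableEquiv.coe_piCongrLeft, Equiv.piCongrLeft_apply_apply]
    congr 1
    · exact Finset.sum_congr rfl fun i _ => by rw [happ]
    congr 1
    · exact Finset.sum_congr rfl fun i _ => by rw [happ]
    · exact Finset.sum_congr rfl fun i _ => by rw [happ]
  -- measure preserving transport
  set ψ1 := (MeasurableEquiv.sumPiEquivProdPi (fun _ : Fin k ⊕ (Fin m ⊕ Fin m) => ℝ)).symm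
    with hψ1def
  set ψ2 := (MeasurableEquiv.sumPiEquivProdPi (fun _ : Fin m ⊕ Fin m => ℝ)).symm with hψ2def
  have hφ : MeasurePreserving φe
      (Measure.pi fun _ : Fin k ⊕ (Fin m ⊕ Fin m) => expMeasure 1)
      (Measure.pi fun _ : Fin n => expMeasure 1) :=
    measurePreserving_piCongrLeft (fun _ : Fin n => expMeasure 1) e
  have hψ1 : MeasurePreserving ψ1
      ((Measure.pi fun _ : Fin k => expMeasure 1).prod
        (Measure.pi fun _ : Fin m ⊕ Fin m => expMeasure 1))
      (Measure.pi fun _ : Fin k ⊕ (Fin m ⊕ Fin m) => expMeasure 1) :=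
    measurePreserving_sumPiEquivProdPi_symm (fun _ => expMeasure 1)
  have hψ2 : MeasurePreserving ψ2
      ((Measure.pi fun _ : Fin m => expMeasure 1).prod
        (Measure.pi fun _ : Fin m => expMeasure 1))
      (Measure.pi fun _ : Fin m ⊕ Fin m => expMeasure 1) :=
    measurePreserving_sumPiEquivProdPi_symm (fun _ => expMeasure 1)
  have hid : MeasurePreserving (Prod.map (id : (Fin k → ℝ) → (Fin k → ℝ)) ψ2)
      ((Measure.pi fun _ : Fin m => expMeasure 1).prod
          (Measure.pi fun _ : Fin m => expMeasure 1) |>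
        fun ν2 => (Measure.pi fun _ : Fin k => expMeasure 1).prod ν2)
      ((Measure.pi fun _ : Fin k => expMeasure 1).prod
        (Measure.pi fun _ : Fin m ⊕ Fin m => expMeasure 1)) :=
    (MeasurePreserving.id _).prod hψ2
  -- the target set in the triple product space
  set S : Set ((Fin k → ℝ) × ((Fin m → ℝ) × (Fin m → ℝ))) :=
    {p | (∑ i, p.1 i) + (∑ i, p.2.1 i) ≤ x ∧ (∑ i, p.1 i) + (∑ i, p.2.2 i) ≤ x} with hSdef
  have hSmeas : MeasurableSet S := by
    have h1 : Measurable (fun p : (Fin k → ℝ) × ((Fin m → ℝ) × (Fin m → ℝ)) => ∑ i, p.1 i) :=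
      Finset.measurable_sum _ (fun i _ => (measurable_pi_apply i).comp measurable_fst)
    have h2 : Measurable (fun p : (Fin k → ℝ) × ((Fin m → ℝ) × (Fin m → ℝ)) => ∑ i, p.2.1 i) :=
      Finset.measurable_sum _ (fun i _ =>
        (measurable_pi_apply i).comp (measurable_fst.comp measurable_snd))
    have h3 : Measurable (fun p : (Fin k → ℝ) × ((Fin m → ℝ) × (Fin m → ℝ)) => ∑ i, p.2.2 i) :=
      Finset.measurable_sum _ (fun i _ =>
        (measurable_pi_apply i).comp (measurable_snd.comp measurable_snd))
    exact ((measurableSet_le (h1.add h2) measurable_const).inter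
      (measurableSet_le (h1.add h3) measurable_const))
  -- preimage identification
  have hpre : (Prod.map (id : (Fin k → ℝ) → (Fin k → ℝ)) ψ2) ⁻¹' (ψ1 ⁻¹' (φe ⁻¹' E)) = S := by
    ext p
    obtain ⟨u, v, w⟩ := p
    simp only [Set.mem_preimage, Prod.map_apply, id_eq]
    set g : (Fin k ⊕ (Fin m ⊕ Fin m)) → ℝ := ψ1 (u, ψ2 (v, w)) with hgdef
    have hg1 : ∀ i, g (Sum.inl i) = u i := fun i => rfl
    have hg2 : ∀ i, g (Sum.inr (Sum.inl i)) = v i := fun i => rfl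
    have hg3 : ∀ i, g (Sum.inr (Sum.inr i)) = w i := fun i => rfl
    have hA : ∑ i ∈ Finset.univ.filter (fun i : Fin n => (i:ℕ) < l), (φe g) i
        = (∑ i, u i) + ∑ i, v i := by
      rw [hgsum g (fun c => c < l) (fun c => Nat.decLt c l)]
      have e1 : (∑ i : Fin k, if ((e (Sum.inl i) : ℕ)) < l then g (Sum.inl i) else 0)
          = ∑ i : Fin k, u i :=
        Finset.sum_congr rfl fun i _ => by
          rw [hv1 i, if_pos (by have := i.isLt; omega), hg1]
      have e2 : (∑ i : Fin m, if ((e (Sum.inr (Sum.inl i)) : ℕ)) < l then g (Sum.inr (Sum.inl i)) else 0)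
          = ∑ i : Fin m, v i :=
        Finset.sum_congr rfl fun i _ => by
          rw [hv2 i, if_pos (by have := i.isLt; omega), hg2]
      have e3 : (∑ i : Fin m, if ((e (Sum.inr (Sum.inr i)) : ℕ)) < l then g (Sum.inr (Sum.inr i)) else 0)
          = 0 :=
        Finset.sum_eq_zero fun i _ => by
          rw [hv3 i, if_neg (by have := i.isLt; omega)]
      rw [e1, e2, e3, add_zero]
    have hB1 : ∑ i ∈ Finset.univ.filter (fun i : Fin n => (i:ℕ) < k), (φe g) i
        = ∑ i, u i := by
      rw [hgsum g (fun c => c < k) (fun c => Nat.decLt c k)]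
      have e1 : (∑ i : Fin k, if ((e (Sum.inl i) : ℕ)) < k then g (Sum.inl i) else 0)
          = ∑ i : Fin k, u i :=
        Finset.sum_congr rfl fun i _ => by
          rw [hv1 i, if_pos i.isLt, hg1]
      have e2 : (∑ i : Fin m, if ((e (Sum.inr (Sum.inl i)) : ℕ)) < k then g (Sum.inr (Sum.inl i)) else 0)
          = 0 :=
        Finset.sum_eq_zero fun i _ => by
          rw [hv2 i, if_neg (by omega)]
      have e3 : (∑ i : Fin m, if ((e (Sum.inr (Sum.inr i)) : ℕ)) < k then g (Sum.inr (Sum.inr i)) else 0)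
          = 0 :=
        Finset.sum_eq_zero fun i _ => by
          rw [hv3 i, if_neg (by omega)]
      rw [e1, e2, e3, add_zero, add_zero]
    have hB2 : ∑ i ∈ Finset.univ.filter (fun i : Fin n => l ≤ (i:ℕ)), (φe g) i
        = ∑ i, w i := by
      rw [hgsum g (fun c => l ≤ c) (fun c => Nat.decLe l c)]
      have e1 : (∑ i : Fin k, if l ≤ ((e (Sum.inl i) : ℕ)) then g (Sum.inl i) else 0)
          = 0 :=
        Finset.sum_eq_zero fun i _ => by
          rw [hv1 i, if_neg (by have := i.isLt; omega)]
      have e2 : (∑ i : Fin m, if l ≤ ((e (Sum.inr (Sum.inl i)) : ℕ)) then g (Sum.inr (Sum.inl i)) else 0)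
          = 0 :=
        Finset.sum_eq_zero fun i _ => by
          rw [hv2 i, if_neg (by have := i.isLt; omega)]
      have e3 : (∑ i : Fin m, if l ≤ ((e (Sum.inr (Sum.inr i)) : ℕ)) then g (Sum.inr (Sum.inr i)) else 0)
          = ∑ i : Fin m, w i :=
        Finset.sum_congr rfl fun i _ => by
          rw [hv3 i, if_pos (by omega), hg3]
      rw [e1, e2, e3, zero_add, zero_add]
    simp only [hEdef, Set.mem_setOf_eq, hSdef, hA, hB1, hB2]
  -- transport the measure
  have htrans : (Measure.pi fun _ : Fin n => expMeasure 1) E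
      = ((Measure.pi fun _ : Fin k => expMeasure 1).prod
          ((Measure.pi fun _ : Fin m => expMeasure 1).prod
            (Measure.pi fun _ : Fin m => expMeasure 1))) S := by
    rw [← hφ.measure_preimage hEmeas.nullMeasurableSet,
      ← hψ1.measure_preimage (hEmeas.preimage hφ.measurable).nullMeasurableSet,
      ← hid.measure_preimage
        ((hEmeas.preimage hφ.measurable).preimage hψ1.measurable).nullMeasurableSet,
      hpre]
  rw [htrans, ← lintegral_indicator_one hSmeas,
    lintegral_prod _ ((measurable_one.indicator hSmeas).aemeasurable)]
  refine lintegral_congr fun u => ?_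
  rw [lintegral_prod (fun q => S.indicator 1 (u, q))
    (((measurable_one.indicator hSmeas).comp measurable_prodMk_left).aemeasurable)]
  refine lintegral_congr fun v => lintegral_congr fun w => ?_
  rw [← ite_and_one]
  rw [Set.indicator_apply]
  simp only [hSdef, Set.mem_setOf_eq, Pi.one_apply]


noncomputable def Qfun (m : ℕ) (x y : ℝ) : ENNReal :=
  ∫⁻ w : Fin m → ℝ, (if y + ∑ i, w i ≤ x then 1 else 0) ∂(Measure.pi fun _ => expMeasure 1)

lemma Qfun_anti (m : ℕ) (x : ℝ) : Antitone (Qfun m x) := by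
  intro y y' hyy
  refine lintegral_mono fun w => ?_
  by_cases h : y' + ∑ i, w i ≤ x
  · rw [if_pos h, if_pos (by linarith)]
  · rw [if_neg h]
    exact zero_le

lemma Qfun_meas (m : ℕ) (x : ℝ) : Measurable (Qfun m x) := (Qfun_anti m x).measurable

lemma Qfun_le_one (m : ℕ) (x : ℝ) : ∀ y, Qfun m x y ≤ 1 := by
  intro y
  haveI : IsProbabilityMeasure (expMeasure 1) := isProbabilityMeasure_expMeasure one_pos
  calc Qfun m x y ≤ ∫⁻ _ : Fin m → ℝ, 1 ∂(Measure.pi fun _ => expMeasure 1) :=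
        lintegral_mono fun w => by by_cases h : y + ∑ i, w i ≤ x <;> simp [h]
    _ = 1 := by rw [lintegral_one, measure_univ]

lemma QV_exists (m : ℕ) {x : ℝ} (hx : 0 < x) :
    ∃ V : ℝ → ENNReal, Measurable V ∧ (∀ y, Qfun m x y ≤ V y) ∧
      (∀ y, ENNReal.ofReal (Real.exp (y - x)) * V y ≤ Qfun m x y) ∧
      (∀ y, 0 < y → V y = if y ≤ x then ENNReal.ofReal ((x - y) ^ m / (Nat.factorial m)) else 0) := by
  haveI : IsProbabilityMeasure (expMeasure 1) := isProbabilityMeasure_expMeasure one_pos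
  match m with
  | 0 =>
    refine ⟨fun y => if y ≤ x then 1 else 0,
      Measurable.ite measurableSet_Iic measurable_const measurable_const, ?_, ?_, ?_⟩
    all_goals
      have hQ : ∀ y : ℝ, Qfun 0 x y = if y ≤ x then 1 else 0 := by
        intro y
        rw [Qfun]
        have hs : ∀ w : Fin 0 → ℝ, (∑ i, w i) = 0 := fun w => by simp
        simp only [hs, add_zero]
        rw [lintegral_const, measure_univ, mul_one]
    · intro y
      rw [hQ]
    · intro y
      rw [hQ]
      by_cases h : y ≤ x
      · simp only [h, if_true, mul_one]
        exact ENNReal.ofReal_le_one.mpr (by rw [Real.exp_le_one_iff]; linarith)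
      · simp [h]
    · intro y hy
      by_cases h : y ≤ x <;> simp [h]
  | m'' + 1 =>
    set V : ℝ → ENNReal := fun y => ∫⁻ s in Set.Ioi (0:ℝ),
      (if y + s ≤ x then 1 else 0) * ENNReal.ofReal (s ^ m'' / (Nat.factorial m'')) with hVdef
    have hQeval : ∀ y, Qfun (m''+1) x y = ∫⁻ s in Set.Ioi (0:ℝ),
        (if y + s ≤ x then 1 else 0) * ENNReal.ofReal (s ^ m'' / (Nat.factorial m''))
          * ENNReal.ofReal (Real.exp (-s)) := by
      intro y
      rw [Qfun]
      exact exp_R m'' (fun s => if y + s ≤ x then 1 else 0)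
        (Measurable.ite (measurableSet_le (measurable_const.add measurable_id) measurable_const)
          measurable_const measurable_const)
    have hVanti : Antitone V := by
      intro y y' hyy
      refine lintegral_mono fun s => ?_
      by_cases h : y' + s ≤ x
      · rw [if_pos h, if_pos (by linarith)]
      · rw [if_neg h, zero_mul]
        exact zero_le
    refine ⟨V, hVanti.measurable, ?_, ?_, ?_⟩
    · intro y
      rw [hQeval]
      refine setLIntegral_mono ((Measurable.ite (measurableSet_le
        (measurable_const.add measurable_id) measurable_const) measurable_const
          measurable_const).mul (measurable_rho m'')) fun s hs => ?_
      calc (if y + s ≤ x then (1:ENNReal) else 0) * ENNReal.ofReal (s ^ m'' / (Nat.factorial m''))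
            * ENNReal.ofReal (Real.exp (-s))
          ≤ (if y + s ≤ x then (1:ENNReal) else 0) * ENNReal.ofReal (s ^ m'' / (Nat.factorial m''))
            * 1 := by
            refine mul_le_mul' le_rfl ?_
            exact ENNReal.ofReal_le_one.mpr (by
              rw [Real.exp_le_one_iff]
              simp only [Set.mem_Ioi] at hs
              linarith)
        _ = _ := mul_one _
    · intro y
      rw [hQeval]
      simp only [hVdef]
      rw [← lintegral_const_mul' _ _ ENNReal.ofReal_ne_top]
      refine setLIntegral_mono (((Measurable.ite (measurableSet_le
        (measurable_const.add measurable_id) measurable_const) measurable_const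
          measurable_const).mul (measurable_rho m'')).mul
          ((Real.measurable_exp.comp measurable_neg).ennreal_ofReal)) fun s hs => ?_
      by_cases h : y + s ≤ x
      · rw [if_pos h, one_mul, mul_comm (ENNReal.ofReal (Real.exp (y - x)))]
        refine mul_le_mul' le_rfl ?_
        exact ENNReal.ofReal_le_ofReal (Real.exp_le_exp.mpr (by linarith))
      · rw [if_neg h, zero_mul, mul_zero, zero_mul]
    · intro y hy
      by_cases h : y ≤ x
      · simp only [hVdef]
        rw [if_pos h]
        have hxy : (0:ℝ) ≤ x - y := by linarith
        have hsplit : Set.Ioi (0:ℝ) = Set.Ioc 0 (x-y) ∪ Set.Ioi (x-y) :=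
          (Set.Ioc_union_Ioi_eq_Ioi hxy).symm
        rw [hsplit, lintegral_union measurableSet_Ioi (Set.Ioc_disjoint_Ioi le_rfl)]
        have h1 : ∫⁻ s in Set.Ioc (0:ℝ) (x-y),
            (if y + s ≤ x then (1:ENNReal) else 0) * ENNReal.ofReal (s ^ m'' / (Nat.factorial m''))
            = ∫⁻ s in Set.Ioc (0:ℝ) (x-y), ENNReal.ofReal (s ^ m'' / (Nat.factorial m'')) := by
          refine setLIntegral_congr_fun measurableSet_Ioc
            (fun s hs => ?_)
          rw [if_pos (by linarith [hs.2]), one_mul]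
        have h2 : ∫⁻ s in Set.Ioi (x-y),
            (if y + s ≤ x then (1:ENNReal) else 0) * ENNReal.ofReal (s ^ m'' / (Nat.factorial m''))
            = 0 := by
          rw [setLIntegral_congr_fun measurableSet_Ioi
            (fun s hs => ?_), lintegral_zero]
          rw [if_neg (by simp only [Set.mem_Ioi] at hs; linarith), zero_mul]
        rw [h1, h2, add_zero, lint_Ioc_pow m'' hxy]
      · simp only [hVdef]
        rw [if_neg h]
        rw [setLIntegral_congr_fun measurableSet_Ioi
          (fun s hs => ?_), lintegral_zero]
        rw [if_neg (by simp only [Set.mem_Ioi] at hs; linarith), zero_mul]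


lemma ite_one_ne_top (P : Prop) [Decidable P] : (if P then (1:ENNReal) else 0) ≠ ⊤ := by
  by_cases h : P <;> simp [h]

lemma triple_to_1d (k' m : ℕ) (x : ℝ) :
    (∫⁻ u : Fin (k'+1) → ℝ, ∫⁻ v : Fin m → ℝ, ∫⁻ w : Fin m → ℝ,
        ((if (∑ i, u i) + (∑ i, v i) ≤ x then 1 else 0) *
         (if (∑ i, u i) + (∑ i, w i) ≤ x then (1:ENNReal) else 0))
        ∂(Measure.pi fun _ => expMeasure 1) ∂(Measure.pi fun _ => expMeasure 1)
        ∂(Measure.pi fun _ => expMeasure 1))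
      = ∫⁻ y in Set.Ioi (0:ℝ), (Qfun m x y * Qfun m x y)
          * ENNReal.ofReal (y ^ k' / (Nat.factorial k')) * ENNReal.ofReal (Real.exp (-y)) := by
  have h1 : ∀ u : Fin (k'+1) → ℝ,
      (∫⁻ v : Fin m → ℝ, ∫⁻ w : Fin m → ℝ,
        ((if (∑ i, u i) + (∑ i, v i) ≤ x then 1 else 0) *
         (if (∑ i, u i) + (∑ i, w i) ≤ x then (1:ENNReal) else 0))
        ∂(Measure.pi fun _ => expMeasure 1) ∂(Measure.pi fun _ => expMeasure 1))
      = Qfun m x (∑ i, u i) * Qfun m x (∑ i, u i) := by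
    intro u
    have hw : ∀ v : Fin m → ℝ,
        (∫⁻ w : Fin m → ℝ,
          ((if (∑ i, u i) + (∑ i, v i) ≤ x then 1 else 0) *
           (if (∑ i, u i) + (∑ i, w i) ≤ x then (1:ENNReal) else 0))
          ∂(Measure.pi fun _ => expMeasure 1))
        = (if (∑ i, u i) + (∑ i, v i) ≤ x then 1 else 0) * Qfun m x (∑ i, u i) := by
      intro v
      rw [lintegral_const_mul' _ _ (ite_one_ne_top _)]
      rfl
    rw [lintegral_congr hw, lintegral_mul_const' _ _
      (ne_top_of_le_ne_top ENNReal.one_ne_top (Qfun_le_one m x _))]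
    rfl
  rw [lintegral_congr h1]
  exact exp_R k' (fun y => Qfun m x y * Qfun m x y) ((Qfun_meas m x).mul (Qfun_meas m x))


lemma final_bound (k' m : ℕ) {x : ℝ} (hx : 0 < x) (Q V : ℝ → ENNReal)
    (hQm : Measurable Q) (hVm : Measurable V)
    (hQle : ∀ y, Q y ≤ V y)
    (hQge : ∀ y, ENNReal.ofReal (Real.exp (y - x)) * V y ≤ Q y)
    (hV : ∀ y, 0 < y → V y = if y ≤ x then ENNReal.ofReal ((x - y) ^ m / (Nat.factorial m)) else 0) :
    ENNReal.ofReal (Real.exp (-(2*x)) * (((Nat.factorial (m+m) : ℝ) /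
        ((Nat.factorial (k'+1+(m+m)) : ℝ) * (Nat.factorial m : ℝ)^2)) * x ^ (k'+1+(m+m))))
      ≤ (∫⁻ y in Set.Ioi (0:ℝ), (Q y * Q y) * ENNReal.ofReal (y ^ k' / (Nat.factorial k'))
          * ENNReal.ofReal (Real.exp (-y)))
    ∧ (∫⁻ y in Set.Ioi (0:ℝ), (Q y * Q y) * ENNReal.ofReal (y ^ k' / (Nat.factorial k'))
          * ENNReal.ofReal (Real.exp (-y)))
      ≤ ENNReal.ofReal (((Nat.factorial (m+m) : ℝ) /
          ((Nat.factorial (k'+1+(m+m)) : ℝ) * (Nat.factorial m : ℝ)^2)) * x ^ (k'+1+(m+m))) := by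
  set ρ : ℝ → ENNReal := fun y => ENNReal.ofReal (y ^ k' / (Nat.factorial k')) with hρdef
  set J := ∫⁻ y in Set.Ioi (0:ℝ), (V y * V y) * ρ y with hJdef
  -- compute J
  have hJ : J = ENNReal.ofReal (((Nat.factorial (m+m) : ℝ) /
      ((Nat.factorial (k'+1+(m+m)) : ℝ) * (Nat.factorial m : ℝ)^2)) * x ^ (k'+1+(m+m))) := by
    rw [hJdef, ← Set.Ioc_union_Ioi_eq_Ioi hx.le,
      lintegral_union measurableSet_Ioi (Set.Ioc_disjoint_Ioi le_rfl)]
    have h2 : ∫⁻ y in Set.Ioi x, (V y * V y) * ρ y = 0 := by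
      rw [setLIntegral_congr_fun measurableSet_Ioi (fun y hy => ?_),
        lintegral_zero]
      rw [hV y (lt_trans hx hy), if_neg (not_le.mpr hy)]
      simp
    rw [h2, add_zero]
    have h1 : ∫⁻ y in Set.Ioc (0:ℝ) x, (V y * V y) * ρ y
        = ENNReal.ofReal ((1 : ℝ) / ((Nat.factorial m : ℝ) * (Nat.factorial m : ℝ)
            * (Nat.factorial k' : ℝ)))
          * ∫⁻ y in Set.Ioc (0:ℝ) x, ENNReal.ofReal (y ^ k' * (x - y) ^ (m+m)) := by
      rw [← lintegral_const_mul' _ _ ENNReal.ofReal_ne_top]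
      refine setLIntegral_congr_fun measurableSet_Ioc
        (fun y hy => ?_)
      rw [hV y hy.1, if_pos hy.2, hρdef]
      have hy0 : (0:ℝ) ≤ y := hy.1.le
      have hxy : (0:ℝ) ≤ x - y := by linarith [hy.2]
      rw [← ENNReal.ofReal_mul (by positivity), ← ENNReal.ofReal_mul (by positivity),
        ← ENNReal.ofReal_mul (by positivity)]
      congr 1
      rw [pow_add]
      field_simp
    rw [h1, lint_beta k' (m+m) hx, ← ENNReal.ofReal_mul (by positivity)]
    congr 1
    rw [show k' + (m+m) + 1 = k' + 1 + (m+m) from by omega]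
    have hf1 : (0:ℝ) < (Nat.factorial k' : ℝ) := by positivity
    have hf2 : (0:ℝ) < (Nat.factorial m : ℝ) := by positivity
    have hf3 : (0:ℝ) < (Nat.factorial (k'+1+(m+m)) : ℝ) := by positivity
    field_simp
  constructor
  · -- lower bound
    rw [ENNReal.ofReal_mul (Real.exp_nonneg _), ← hJ,
      ← lintegral_const_mul' _ _ ENNReal.ofReal_ne_top]
    refine setLIntegral_mono (((hQm.mul hQm).mul (measurable_rho k')).mul measurable_expennr)
      fun y hy => ?_
    simp only [Set.mem_Ioi] at hy
    calc ENNReal.ofReal (Real.exp (-(2*x))) * ((V y * V y) * ρ y)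
        ≤ (ENNReal.ofReal (Real.exp (y - x)) * ENNReal.ofReal (Real.exp (y - x))
            * ENNReal.ofReal (Real.exp (-y))) * ((V y * V y) * ρ y) := by
          refine mul_le_mul' ?_ le_rfl
          rw [← ENNReal.ofReal_mul (Real.exp_nonneg _), ← ENNReal.ofReal_mul (by positivity),
            ← Real.exp_add, ← Real.exp_add]
          exact ENNReal.ofReal_le_ofReal (Real.exp_le_exp.mpr (by linarith))
      _ = ((ENNReal.ofReal (Real.exp (y - x)) * V y) * (ENNReal.ofReal (Real.exp (y - x)) * V y))
            * ρ y * ENNReal.ofReal (Real.exp (-y)) := by ring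
      _ ≤ (Q y * Q y) * ρ y * ENNReal.ofReal (Real.exp (-y)) := by
          exact mul_le_mul' (mul_le_mul' (mul_le_mul' (hQge y) (hQge y)) le_rfl) le_rfl
  · -- upper bound
    refine le_trans ?_ (le_of_eq hJ)
    refine setLIntegral_mono ((hVm.mul hVm).mul (measurable_rho k')) fun y hy => ?_
    calc (Q y * Q y) * ρ y * ENNReal.ofReal (Real.exp (-y))
        ≤ (V y * V y) * ρ y * 1 := by
          refine mul_le_mul' (mul_le_mul' (mul_le_mul' (hQle y) (hQle y)) le_rfl) ?_
          rw [show (1:ENNReal) = ENNReal.ofReal 1 from ENNReal.ofReal_one.symm]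
          exact ENNReal.ofReal_le_ofReal (by
            rw [Real.exp_le_one_iff]
            simp only [Set.mem_Ioi] at hy
            linarith)
      _ = (V y * V y) * ρ y := mul_one _



/-- **Overlap probability (Lemma 6.1)**: let `ξ_1, …, ξ_{2l−k}` be mutually independent rate-1
exponential random variables, `X := ξ_1 + ⋯ + ξ_l` and
`X' := ξ_1 + ⋯ + ξ_k + ξ_{l+1} + ⋯ + ξ_{2l−k}` (two sums of `l` variables sharing exactly `k`
common summands). Then for `x > 0`, with `B := (2(l−k))!/((2l−k)!·((l−k)!)²)`,
`e^{−2x}·B·x^{2l−k} ≤ P(X ≤ x, X' ≤ x) ≤ B·x^{2l−k}`. -/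
theorem overlap_probability
    {Ω : Type*} [MeasurableSpace Ω] (μ : Measure Ω) [IsProbabilityMeasure μ]
    (l k : ℕ) (hk1 : 1 ≤ k) (hkl : k ≤ l)
    (ξ : ℕ → Ω → ℝ) (hmeas : ∀ i, Measurable (ξ i))
    (hindep : iIndepFun
      (fun i : Fin (2 * l - k) => ξ ((i : ℕ) + 1)) μ)
    (hexp : ∀ i, 1 ≤ i → i ≤ 2 * l - k → μ.map (ξ i) = expMeasure 1)
    (x : ℝ) (hx : 0 < x) :
    Real.exp (-(2 * x)) *
        ((Nat.factorial (2 * (l - k)) : ℝ) /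
          ((Nat.factorial (2 * l - k) : ℝ) * (Nat.factorial (l - k) : ℝ) ^ 2)) *
        x ^ (2 * l - k) ≤
      (μ {ω | (∑ i ∈ Finset.Icc 1 l, ξ i ω) ≤ x ∧
          ((∑ i ∈ Finset.Icc 1 k, ξ i ω) + ∑ i ∈ Finset.Icc (l + 1) (2 * l - k), ξ i ω) ≤ x}).toReal ∧
    (μ {ω | (∑ i ∈ Finset.Icc 1 l, ξ i ω) ≤ x ∧
          ((∑ i ∈ Finset.Icc 1 k, ξ i ω) + ∑ i ∈ Finset.Icc (l + 1) (2 * l - k), ξ i ω) ≤ x}).toReal ≤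
      ((Nat.factorial (2 * (l - k)) : ℝ) /
          ((Nat.factorial (2 * l - k) : ℝ) * (Nat.factorial (l - k) : ℝ) ^ 2)) *
        x ^ (2 * l - k) := by
  haveI : IsProbabilityMeasure (expMeasure 1) := isProbabilityMeasure_expMeasure one_pos
  obtain ⟨k', rfl⟩ : ∃ k', k = k' + 1 := ⟨k - 1, by omega⟩
  set n := 2 * l - (k' + 1) with hndef
  set m := l - (k' + 1) with hmdef
  have hln : l ≤ n := by omega
  have hn : n = (k' + 1) + (m + m) := by omega
  have hl : l = (k' + 1) + m := by omega
  set T : Ω → (Fin n → ℝ) := fun ω (i : Fin n) => ξ ((i:ℕ)+1) ω with hTdef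
  have hT : Measurable T := measurable_pi_lambda _ (fun i => hmeas _)
  set E : Set (Fin n → ℝ) := {t : Fin n → ℝ |
      (∑ i ∈ Finset.univ.filter (fun i : Fin n => (i:ℕ) < l), t i) ≤ x ∧
      (∑ i ∈ Finset.univ.filter (fun i : Fin n => (i:ℕ) < k'+1), t i) +
      (∑ i ∈ Finset.univ.filter (fun i : Fin n => l ≤ (i:ℕ)), t i) ≤ x} with hEdef
  have hEmeas : MeasurableSet E := by
    refine MeasurableSet.inter ?_ ?_
    · exact measurableSet_le (Finset.measurable_sum _ (fun i _ => measurable_pi_apply i))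
        measurable_const
    · exact measurableSet_le ((Finset.measurable_sum _ (fun i _ => measurable_pi_apply i)).add
        (Finset.measurable_sum _ (fun i _ => measurable_pi_apply i))) measurable_const
  have hset : {ω | (∑ i ∈ Finset.Icc 1 l, ξ i ω) ≤ x ∧
      ((∑ i ∈ Finset.Icc 1 (k'+1), ξ i ω) + ∑ i ∈ Finset.Icc (l + 1) n, ξ i ω) ≤ x}
      = T ⁻¹' E := by
    ext ω
    have h1 := sum_shift (fun j => ξ j ω) 0 l n hln
    have h2 := sum_shift (fun j => ξ j ω) 0 (k'+1) n (by omega)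
    have h3 := sum_shift (fun j => ξ j ω) l n n le_rfl
    simp only [zero_add, Nat.zero_le, true_and] at h1 h2
    simp only [Fin.is_lt, and_true] at h3
    simp only [Set.mem_setOf_eq, Set.mem_preimage, hEdef, hTdef]
    rw [h1, h2, h3]
  have hmap := joint_law μ n ξ hmeas hindep
    (fun i => hexp ((i:ℕ)+1) (by omega) (by have := i.isLt; omega))
  have hμ : (μ {ω | (∑ i ∈ Finset.Icc 1 l, ξ i ω) ≤ x ∧
      ((∑ i ∈ Finset.Icc 1 (k'+1), ξ i ω) + ∑ i ∈ Finset.Icc (l + 1) n, ξ i ω) ≤ x})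
      = ∫⁻ y in Set.Ioi (0:ℝ), (Qfun m x y * Qfun m x y)
          * ENNReal.ofReal (y ^ k' / (Nat.factorial k')) * ENNReal.ofReal (Real.exp (-y)) := by
    rw [hset, ← Measure.map_apply hT hEmeas, hmap, hEdef,
      pi_split (k'+1) m n l hn hl x, triple_to_1d k' m x]
  rw [hμ]
  obtain ⟨V, hVm, hQle, hQge, hV⟩ := QV_exists m hx
  have hfin := final_bound k' m hx (Qfun m x) V (Qfun_meas m x) hVm hQle hQge hV
  have hIne : (∫⁻ y in Set.Ioi (0:ℝ), (Qfun m x y * Qfun m x y)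
      * ENNReal.ofReal (y ^ k' / (Nat.factorial k')) * ENNReal.ofReal (Real.exp (-y))) ≠ ⊤ :=
    ne_top_of_le_ne_top ENNReal.ofReal_ne_top hfin.2
  rw [show 2 * (l - (k'+1)) = m + m from by omega, show n = (k'+1) + (m+m) from hn]
  constructor
  · rw [mul_assoc]
    exact (ENNReal.ofReal_le_iff_le_toReal hIne).mp hfin.1
  · exact ENNReal.toReal_le_of_le_ofReal (by positivity) hfin.2
end

section
/- Let l, k be integers with 1 ≤ k ≤ l, let ξ_1,…,ξ_{2l−k} be mutually independent rate-1 exponential random variables, and set X := Σ_{i=1}^{l} ξ_i and X' := Σ_{i=1}^{k} ξ_i + Σ_{i=l+1}^{2l−k} ξ_i. Then for all reals a > 0 and b > 0: P(X ≤ a+b and X' ≤ a+b) ≤ e^{2a} · ((a+b)/a)^{2l−k} · P(X ≤ a and X' ≤ a). -/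
/-!
Write `λ = (a + b) / a ≥ 1` and `Y = (ξ_1, …, ξ_n)`, `n = 2l - k`. Both events are `{Y ∈ A_t}` for a
set `A_t` cut out by two linear inequalities `≤ t`, so `A_{a+b} = λ • A_a` and
`P(Y ∈ A_{a+b}) = P(λ⁻¹ Y ∈ A_a)`. The coordinates of `λ⁻¹ Y` are independent `Exp(λ)` variables, and
the density `λ e^{-λt}` of `Exp(λ)` is at most `λ` times that of `Exp(1)`. Hence
`P(Y ∈ A_{a+b}) ≤ λ^n P(Y ∈ A_a)`, and `e^{2a} ≥ 1`.
-/

open MeasureTheory ProbabilityTheory Finset Real Module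

open scoped ENNReal NNReal Pointwise

namespace MeasureTheory.Measure

variable {ι : Type*} [Fintype ι] {α : ι → Type*} [∀ i, MeasurableSpace (α i)]

theorem pi_mono {μ ν : ∀ i, Measure (α i)} (h : ∀ i, μ i ≤ ν i) :
    Measure.pi μ ≤ Measure.pi ν := by
  refine Measure.le_iff.2 fun s hs => ?_
  simp only [Measure.pi_def, toMeasure_apply _ _ hs]
  refine OuterMeasure.le_pi.2 (fun t _ => ?_) s
  exact (OuterMeasure.pi_pi_le _ t).trans (Finset.prod_le_prod' fun i _ => h i (t i))

theorem pi_smul (μ : ∀ i, Measure (α i)) [∀ i, SigmaFinite (μ i)] (c : ℝ≥0) :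
    Measure.pi (fun i => c • μ i) = c ^ Fintype.card ι • Measure.pi μ := by
  refine pi_eq fun s hs => ?_
  rw [smul_apply, pi_pi]
  simp only [smul_apply, ENNReal.smul_def, smul_eq_mul, ENNReal.coe_pow]
  rw [Finset.prod_mul_distrib, Finset.prod_const, Finset.card_univ]

theorem withDensity_smul_set_le {E : Type*} [NormedAddCommGroup E]
    [NormedSpace ℝ E] [MeasurableSpace E] [BorelSpace E] [FiniteDimensional ℝ E]
    (μ : Measure E) [μ.IsAddHaarMeasure] {f : E → ℝ≥0∞} {r : ℝ} (hr : 0 < r)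
    (hfr : ∀ x, f (r • x) ≤ f x) {s : Set E} (hs : MeasurableSet s) :
    μ.withDensity f (r • s) ≤ ENNReal.ofReal (r ^ finrank ℝ E) * μ.withDensity f s := by
  have hμ : μ = ENNReal.ofReal (r ^ finrank ℝ E) • μ.map (r • ·) := by
    rw [map_addHaar_smul μ hr.ne', smul_smul, ← ENNReal.ofReal_mul (by positivity),
      abs_of_pos (by positivity), mul_inv_cancel₀ (by positivity), ENNReal.ofReal_one, one_smul]
  calc μ.withDensity f (r • s) = ∫⁻ x, (r • s).indicator f x ∂μ := by
        rw [withDensity_apply _ (hs.const_smul₀ r), lintegral_indicator (hs.const_smul₀ r)]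
    _ = ENNReal.ofReal (r ^ finrank ℝ E) * ∫⁻ x, (r • s).indicator f (r • x) ∂μ := by
        conv_lhs => rw [hμ]
        rw [lintegral_smul_measure, smul_eq_mul]
        congr 1
        exact lintegral_map_equiv _ (Homeomorph.smulOfNeZero r hr.ne').toMeasurableEquiv
    _ ≤ ENNReal.ofReal (r ^ finrank ℝ E) * ∫⁻ x, s.indicator f x ∂μ := by
        gcongr with x
        by_cases hx : x ∈ s
        · rw [Set.indicator_of_mem (Set.smul_mem_smul_set hx), Set.indicator_of_mem hx]
          exact hfr x
        · rw [Set.indicator_of_notMem (by rwa [Set.smul_mem_smul_set_iff₀ hr.ne'])]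
          exact zero_le
    _ = ENNReal.ofReal (r ^ finrank ℝ E) * μ.withDensity f s := by
        rw [withDensity_apply _ hs, lintegral_indicator hs]

end MeasureTheory.Measure

namespace ProbabilityTheory

variable {β r : ℝ}

theorem exponentialPDF_mul_le (hβ : 0 ≤ β) (hr : 1 ≤ r) (t : ℝ) :
    exponentialPDF β (r * t) ≤ exponentialPDF β t := by
  rcases lt_or_ge t 0 with ht | ht
  · rw [exponentialPDF_of_neg (by nlinarith)]
    exact zero_le
  · rw [exponentialPDF_of_nonneg (by nlinarith), exponentialPDF_of_nonneg ht]
    gcongr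
    nlinarith

theorem expMeasure_smul_set_le (hβ : 0 ≤ β) (hr : 1 ≤ r) {s : Set ℝ} (hs : MeasurableSet s) :
    expMeasure β (r • s) ≤ ENNReal.ofReal r * expMeasure β s := by
  have h := volume.withDensity_smul_set_le (zero_lt_one.trans_le hr)
    (exponentialPDF_mul_le hβ hr) hs
  rwa [finrank_self, pow_one] at h

theorem map_inv_smul_expMeasure_le (hβ : 0 < β) (hr : 1 ≤ r) :
    (expMeasure β).map (r⁻¹ • ·) ≤ r.toNNReal • expMeasure β := by
  refine Measure.le_iff.2 fun s hs => ?_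
  rw [Measure.map_apply (measurable_const_smul _) hs,
    Set.preimage_smul_inv₀ (zero_lt_one.trans_le hr).ne', Measure.smul_apply, ENNReal.smul_def,
    smul_eq_mul, ENNReal.ofNNReal_toNNReal]
  exact expMeasure_smul_set_le hβ.le hr hs

theorem pi_expMeasure_smul_set_le {ι : Type*} [Fintype ι] (hβ : 0 < β) (hr : 1 ≤ r)
    {T : Set (ι → ℝ)} (hT : MeasurableSet T) :
    Measure.pi (fun _ : ι => expMeasure β) (r • T)
      ≤ ENNReal.ofReal (r ^ Fintype.card ι) * Measure.pi (fun _ : ι => expMeasure β) T := by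
  have := isProbabilityMeasure_expMeasure hβ
  calc Measure.pi (fun _ : ι => expMeasure β) (r • T)
      = (Measure.pi fun _ : ι => expMeasure β).map (r⁻¹ • ·) T := by
        rw [Measure.map_apply (measurable_const_smul _) hT]
        exact congrArg _ (Set.preimage_smul_inv₀ (zero_lt_one.trans_le hr).ne' T).symm
    _ = Measure.pi (fun _ : ι => (expMeasure β).map (r⁻¹ • ·)) T :=
        congrArg (· T) (Measure.pi_map_pi (μ := fun _ : ι => expMeasure β)
          fun _ => (measurable_const_smul r⁻¹).aemeasurable)
    _ ≤ Measure.pi (fun _ : ι => r.toNNReal • expMeasure β) T :=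
        Measure.pi_mono (fun _ => map_inv_smul_expMeasure_le hβ hr) T
    _ = ENNReal.ofReal (r ^ Fintype.card ι) * Measure.pi (fun _ : ι => expMeasure β) T := by
        rw [Measure.pi_smul, Measure.smul_apply, ENNReal.smul_def, smul_eq_mul,
          ENNReal.ofReal_pow (zero_le_one.trans hr)]
        rfl

end ProbabilityTheory

/-- Coordinates of `x : Fin n → ℝ` are numbered from `1`, like `ξ_1, …, ξ_n`; indices of `S`
outside `[1, n]` contribute `0`. -/
noncomputable def shiftedSum (n : ℕ) (S : Finset ℕ) : (Fin n → ℝ) →ₗ[ℝ] ℝ :=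
  ∑ i ∈ S, if h : i - 1 < n then LinearMap.proj ⟨i - 1, h⟩ else 0

theorem shiftedSum_apply_of_subset {n : ℕ} {S : Finset ℕ} (hS : S ⊆ Icc 1 n) (ξ : ℕ → ℝ) :
    shiftedSum n S (fun j => ξ (j + 1)) = ∑ i ∈ S, ξ i := by
  simp only [shiftedSum, LinearMap.coe_sum, Finset.sum_apply]
  refine Finset.sum_congr rfl fun i hi => ?_
  obtain ⟨hi1, hin⟩ := Finset.mem_Icc.1 (hS hi)
  rw [dif_pos (by omega)]
  simp only [LinearMap.proj_apply]
  congr 1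
  omega

theorem setOf_le_and_le_mul {E : Type*} [AddCommGroup E] [Module ℝ E] (φ ψ : E →ₗ[ℝ] ℝ)
    {r : ℝ} (hr : 0 < r) (t : ℝ) :
    {x | φ x ≤ r * t ∧ ψ x ≤ r * t} = r • {x | φ x ≤ t ∧ ψ x ≤ t} := by
  ext x
  simp only [Set.mem_smul_set_iff_inv_smul_mem₀ hr.ne', Set.mem_ofPred_eq, map_smul, smul_eq_mul,
    inv_mul_le_iff₀ hr]

theorem measure_le_and_le_mul_le {Ω ι : Type*} [MeasurableSpace Ω] [Fintype ι] {μ : Measure Ω}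
    {Y : Ω → ι → ℝ} (hY : Measurable Y) {β : ℝ} (hβ : 0 < β)
    (hlaw : μ.map Y = Measure.pi fun _ => expMeasure β) (φ ψ : (ι → ℝ) →ₗ[ℝ] ℝ) {r : ℝ}
    (hr : 1 ≤ r) (t : ℝ) :
    μ {ω | φ (Y ω) ≤ r * t ∧ ψ (Y ω) ≤ r * t}
      ≤ ENNReal.ofReal (r ^ Fintype.card ι) * μ {ω | φ (Y ω) ≤ t ∧ ψ (Y ω) ≤ t} := by
  have hA : ∀ s, MeasurableSet {x | φ x ≤ s ∧ ψ x ≤ s} := fun s =>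
    (measurableSet_le φ.continuous_of_finiteDimensional.measurable measurable_const).inter
      (measurableSet_le ψ.continuous_of_finiteDimensional.measurable measurable_const)
  change μ (Y ⁻¹' {x | φ x ≤ r * t ∧ ψ x ≤ r * t})
    ≤ ENNReal.ofReal (r ^ Fintype.card ι) * μ (Y ⁻¹' {x | φ x ≤ t ∧ ψ x ≤ t})
  rw [← Measure.map_apply hY (hA _), ← Measure.map_apply hY (hA _), hlaw,
    setOf_le_and_le_mul φ ψ (zero_lt_one.trans_le hr)]
  exact pi_expMeasure_smul_set_le hβ hr (hA t)

theorem overlap_probability_shift_general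
    {Ω : Type*} [MeasurableSpace Ω] (μ : Measure Ω) [IsProbabilityMeasure μ]
    (l k : ℕ) (hkl : k ≤ l)
    (ξ : ℕ → Ω → ℝ) (hmeas : ∀ i, Measurable (ξ i))
    (hindep : iIndepFun
      (fun i : Fin (2 * l - k) => ξ ((i : ℕ) + 1)) μ)
    (hexp : ∀ i, 1 ≤ i → i ≤ 2 * l - k → μ.map (ξ i) = expMeasure 1)
    (a b : ℝ) (ha : 0 < a) (hb : 0 < b) :
    (μ {ω | (∑ i ∈ Finset.Icc 1 l, ξ i ω) ≤ a + b ∧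
        ((∑ i ∈ Finset.Icc 1 k, ξ i ω) + ∑ i ∈ Finset.Icc (l + 1) (2 * l - k), ξ i ω) ≤ a + b}).toReal ≤
      Real.exp (2 * a) * ((a + b) / a) ^ (2 * l - k) *
        (μ {ω | (∑ i ∈ Finset.Icc 1 l, ξ i ω) ≤ a ∧
          ((∑ i ∈ Finset.Icc 1 k, ξ i ω) + ∑ i ∈ Finset.Icc (l + 1) (2 * l - k), ξ i ω) ≤ a}).toReal := by
  set n := 2 * l - k
  set r := (a + b) / a
  let Y : Ω → Fin n → ℝ := fun ω j => ξ (j + 1) ω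
  let φ := shiftedSum n (Icc 1 l)
  let ψ := shiftedSum n (Icc 1 k) + shiftedSum n (Icc (l + 1) n)
  have hevent : ∀ t, {ω | (∑ i ∈ Icc 1 l, ξ i ω) ≤ t ∧
      ((∑ i ∈ Icc 1 k, ξ i ω) + ∑ i ∈ Icc (l + 1) n, ξ i ω) ≤ t}
        = {ω | φ (Y ω) ≤ t ∧ ψ (Y ω) ≤ t} := by
    intro t
    ext ω
    simp only [Set.mem_ofPred_eq, φ, ψ, Y, LinearMap.add_apply,
      shiftedSum_apply_of_subset (Icc_subset_Icc_right (by omega : l ≤ n)) (ξ · ω),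
      shiftedSum_apply_of_subset (Icc_subset_Icc_right (by omega : k ≤ n)) (ξ · ω),
      shiftedSum_apply_of_subset (Icc_subset_Icc_left (by omega : 1 ≤ l + 1)) (ξ · ω)]
  have hlaw : μ.map Y = Measure.pi fun _ => expMeasure 1 := by
    rw [hindep.map_fun_eq_pi_map fun j => (hmeas _).aemeasurable]
    exact congrArg Measure.pi (funext fun j => hexp _ (by omega) (by omega))
  have hr : 1 ≤ r := by rw [le_div_iff₀ ha]; linarith
  have key := measure_le_and_le_mul_le (measurable_pi_lambda _ fun j => hmeas _) one_pos hlaw φ ψ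
    hr a
  rw [div_mul_cancel₀ _ ha.ne', Fintype.card_fin] at key
  rw [hevent, hevent]
  calc _ ≤ r ^ n * (μ {ω | φ (Y ω) ≤ a ∧ ψ (Y ω) ≤ a}).toReal := by
        simpa [ENNReal.toReal_mul, ENNReal.toReal_ofReal (by positivity : 0 ≤ r ^ n)] using
          ENNReal.toReal_mono (by finiteness) key
    _ ≤ Real.exp (2 * a) * r ^ n * (μ {ω | φ (Y ω) ≤ a ∧ ψ (Y ω) ≤ a}).toReal := by
        gcongr
        exact le_mul_of_one_le_left (by positivity) (one_le_exp (by positivity))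

/-- **Lemma 6.5**: let `ξ_1, …, ξ_{2l−k}` be mutually independent rate-1 exponential random
variables, `X := ξ_1 + ⋯ + ξ_l` and `X' := ξ_1 + ⋯ + ξ_k + ξ_{l+1} + ⋯ + ξ_{2l−k}`. Then for
all `a, b > 0`, `P(X ≤ a+b, X' ≤ a+b) ≤ e^{2a}·((a+b)/a)^{2l−k}·P(X ≤ a, X' ≤ a)`. -/
theorem overlap_probability_shift
    {Ω : Type*} [MeasurableSpace Ω] (μ : Measure Ω) [IsProbabilityMeasure μ]
    (l k : ℕ) (hk1 : 1 ≤ k) (hkl : k ≤ l)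
    (ξ : ℕ → Ω → ℝ) (hmeas : ∀ i, Measurable (ξ i))
    (hindep : iIndepFun
      (fun i : Fin (2 * l - k) => ξ ((i : ℕ) + 1)) μ)
    (hexp : ∀ i, 1 ≤ i → i ≤ 2 * l - k → μ.map (ξ i) = expMeasure 1)
    (a b : ℝ) (ha : 0 < a) (hb : 0 < b) :
    (μ {ω | (∑ i ∈ Finset.Icc 1 l, ξ i ω) ≤ a + b ∧
        ((∑ i ∈ Finset.Icc 1 k, ξ i ω) + ∑ i ∈ Finset.Icc (l + 1) (2 * l - k), ξ i ω) ≤ a + b}).toReal ≤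
      Real.exp (2 * a) * ((a + b) / a) ^ (2 * l - k) *
        (μ {ω | (∑ i ∈ Finset.Icc 1 l, ξ i ω) ≤ a ∧
          ((∑ i ∈ Finset.Icc 1 k, ξ i ω) + ∑ i ∈ Finset.Icc (l + 1) (2 * l - k), ξ i ω) ≤ a}).toReal :=
  overlap_probability_shift_general μ l k hkl ξ hmeas hindep hexp a b ha hb
end

section
/- For all integers n ≥ 1 and 0 ≤ k ≤ n, the number of permutations σ of {1,…,n} for which the set {r ∈ {1,…,n} : σ maps {1,…,r−1} onto itself and σ(r) = r} has exactly k elements is at most (n − k)! · binom(n, k). -/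
open Classical in
noncomputable def goodSet (n : ℕ) (σ : Equiv.Perm (Fin n)) : Finset (Fin n) :=
  Finset.univ.filter (fun r => (⇑σ '' {j : Fin n | j < r} = {j : Fin n | j < r}) ∧ σ r = r)

lemma goodSet_coe (n : ℕ) (σ : Equiv.Perm (Fin n)) :
    (goodSet n σ : Set (Fin n)) =
      {r : Fin n | (⇑σ '' {j : Fin n | j < r} = {j : Fin n | j < r}) ∧ σ r = r} := by
  ext r; simp [goodSet]

lemma mem_goodSet {n : ℕ} {σ : Equiv.Perm (Fin n)} {r : Fin n} :
    r ∈ goodSet n σ ↔ (⇑σ '' {j : Fin n | j < r} = {j : Fin n | j < r}) ∧ σ r = r := by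
  simp [goodSet]

lemma goodSet_fix {n : ℕ} {σ : Equiv.Perm (Fin n)} {r : Fin n} (h : r ∈ goodSet n σ) :
    σ r = r := (mem_goodSet.1 h).2

lemma goodSet_compl_iff {n : ℕ} (σ : Equiv.Perm (Fin n)) (x : Fin n) :
    x ∈ (goodSet n σ)ᶜ ↔ σ x ∈ (goodSet n σ)ᶜ := by
  simp only [Finset.mem_compl]
  constructor
  · intro hx hmem
    apply hx
    have h1 : σ (σ x) = σ x := goodSet_fix hmem
    have h2 : σ x = x := σ.injective h1
    rw [h2] at hmem
    exact hmem
  · intro hx hmem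
    apply hx
    rw [goodSet_fix hmem]
    exact hmem

noncomputable def embedPerm (n m : ℕ) (S : Finset (Fin n)) (σ : Equiv.Perm (Fin n)) :
    Equiv.Perm (Fin m) :=
  if h : (∀ x, x ∈ Sᶜ ↔ σ x ∈ Sᶜ) ∧ Fintype.card {x : Fin n // x ∈ Sᶜ} = m then
    ((Fintype.equivFinOfCardEq h.2).symm.trans (σ.subtypePerm (fun x => (h.1 x).symm))).trans
      (Fintype.equivFinOfCardEq h.2)
  else 1

lemma embedPerm_inj {n m : ℕ} (S : Finset (Fin n)) (σ τ : Equiv.Perm (Fin n))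
    (hσ : ∀ x, x ∈ Sᶜ ↔ σ x ∈ Sᶜ) (hτ : ∀ x, x ∈ Sᶜ ↔ τ x ∈ Sᶜ)
    (hm : Fintype.card {x : Fin n // x ∈ Sᶜ} = m)
    (hfσ : ∀ x ∈ S, σ x = x) (hfτ : ∀ x ∈ S, τ x = x)
    (h : embedPerm n m S σ = embedPerm n m S τ) : σ = τ := by
  unfold embedPerm at h
  rw [dif_pos ⟨hσ, hm⟩, dif_pos ⟨hτ, hm⟩] at h
  have h2 : ∀ y : {x : Fin n // x ∈ Sᶜ}, σ.subtypePerm (fun x => (hσ x).symm) y = τ.subtypePerm (fun x => (hτ x).symm) y := by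
    intro y
    have := DFunLike.congr_fun h ((Fintype.equivFinOfCardEq hm) y)
    simp only [Equiv.trans_apply, Equiv.symm_apply_apply] at this
    exact (Fintype.equivFinOfCardEq hm).injective this
  ext x
  by_cases hx : x ∈ S
  · rw [hfσ x hx, hfτ x hx]
  · have hx' : x ∈ Sᶜ := Finset.mem_compl.2 hx
    have := congrArg Subtype.val (h2 ⟨x, hx'⟩)
    simp only [Equiv.Perm.subtypePerm_apply] at this
    exact congrArg Fin.val this

/-- **Path counting for directed paths (Fill–Pemantle bound)**: the number of permutations `σ`
of `{0,…,n−1}` for which the set of indices `r` such that `σ` maps `{j | j < r}` onto itself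
and `σ r = r` has exactly `k` elements is at most `(n − k)! · C(n, k)`. (Such indices `r`
correspond to the edges shared by the directed hypercube path of `σ` and the identity
reference path.) -/
theorem directed_path_counting (n k : ℕ) (hn : 1 ≤ n) (hk : k ≤ n) :
    Nat.card {σ : Equiv.Perm (Fin n) //
        Set.ncard {r : Fin n | (⇑σ '' {j : Fin n | j < r} = {j : Fin n | j < r}) ∧ σ r = r}
          = k} ≤
      (n - k).factorial * n.choose k := by
  classical
  have hcard : ∀ σ : {σ : Equiv.Perm (Fin n) //
      Set.ncard {r : Fin n | (⇑σ '' {j : Fin n | j < r} = {j : Fin n | j < r}) ∧ σ r = r}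
        = k}, (goodSet n σ.1).card = k := by
    intro σ
    have := σ.2
    rw [← goodSet_coe, Set.ncard_coe_finset] at this
    exact this
  have hcompl : ∀ σ : Equiv.Perm (Fin n), (goodSet n σ).card = k →
      Fintype.card {x : Fin n // x ∈ (goodSet n σ)ᶜ} = n - k := by
    intro σ hσ
    rw [Fintype.card_coe, Finset.card_compl, hσ, Fintype.card_fin]
  set F : {σ : Equiv.Perm (Fin n) //
      Set.ncard {r : Fin n | (⇑σ '' {j : Fin n | j < r} = {j : Fin n | j < r}) ∧ σ r = r}
        = k} → ({S : Finset (Fin n) // S.card = k} × Equiv.Perm (Fin (n - k))) :=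
    fun σ => (⟨goodSet n σ.1, hcard σ⟩, embedPerm n (n - k) (goodSet n σ.1) σ.1) with hF
  have hinj : Function.Injective F := by
    intro σ τ h
    rw [hF, Prod.mk.injEq, Subtype.mk.injEq] at h
    obtain ⟨hS, hE⟩ := h
    rw [hS] at hE
    refine Subtype.ext (embedPerm_inj (goodSet n τ.1) σ.1 τ.1 ?_ (goodSet_compl_iff τ.1)
      (hcompl τ.1 (hcard τ)) ?_ (fun x hx => goodSet_fix hx) hE)
    · rw [← hS]; exact goodSet_compl_iff σ.1
    · rw [← hS]; exact fun x hx => goodSet_fix hx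
  calc Nat.card _ ≤ Nat.card ({S : Finset (Fin n) // S.card = k} × Equiv.Perm (Fin (n - k))) :=
        Nat.card_le_card_of_injective F hinj
    _ = (n - k).factorial * n.choose k := by
        rw [Nat.card_eq_fintype_card, Fintype.card_prod, Fintype.card_finset_len,
          Fintype.card_perm, Fintype.card_fin, Fintype.card_fin, Nat.mul_comm]
end
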